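/- arXiv:1812.10939 — 3 statements merged into one kernel-verified Lean document; each statement's English description precedes it below -/
import Mathlib

section
/- Under the strong-mixing framework, let s ≤ t be natural numbers, let h : X → ℝ be bounded measurable with osc(h) ≤ h∞, and let K ≥ 1 be an integer. Let φ_s be any probability measure on X and define the filter sequence recursively by φ_{u+1}(f) := [∬ f(x') g_{u+1}(x') q(x,x') ν(dx') φ_u(dx)] / [∬ g_{u+1}(x') q(x,x') ν(dx') φ_u(dx)] for u ≥ s. Define T_{s|s} := h and T_{s|u+1}(y) := ∫ T_{s|u}(x) B_{φ_u}(y, dx). Define the kernels L_u f(x) := ∫ f(x') g_{u+1}(x') q(x,x') ν(dx'), the functions w_ℓ(z) := ∫ (T_{s|ℓ}(x) − T_{s|ℓ+1}(z))² B_{φ_ℓ}(z, dx), and η_{s,t} := Σ_{ℓ=s}^{t−1} K^{ℓ−t} · φ_ℓ(L_ℓ(w_ℓ · L_{ℓ+1}⋯L_{t−1} 1)) / φ_ℓ(L_ℓ L_{ℓ+1} ⋯ L_{t−1} 1) (empty kernel products being the identity, and η_{s,s} := 0). Set σ_{s|t} := φ_t((T_{s|t} − φ_t(T_{s|t}))²)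 + η_{s,t}. Then, with c₁ := 1 − 4/((1−ρ)(1−Kρ²)), c₂ := 4/((1−ρ)(1−Kρ²)) and c₃ := 4/(1−ρ): if Kρ² ≠ 1 then σ_{s|t} ≤ h∞² (c₁ ρ^{2(t−s)} + c₂ K^{−(t−s)}), and if Kρ² = 1 then σ_{s|t} ≤ h∞² (ρ^{2(t−s)} + c₃ (t−s) K^{−(t−s)}). -/
open MeasureTheory
set_option linter.unusedSectionVars false
set_option maxHeartbeats 1000000

noncomputable section

variable {X : Type*} [MeasurableSpace X]

/-- Oscillation of a real-valued function: `osc f = sup_{x,x'} |f x − f x'|`. -/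
def osc {X : Type*} (f : X → ℝ) : ℝ := ⨆ p : X × X, |f p.1 - f p.2|

/-- The unnormalised one-step kernel `L_u f (x) = ∫ f(x') g_{u+1}(x') q(x,x') ν(dx')`. -/
def Lker (ν : Measure X) (q : X → X → ℝ) (g : ℕ → X → ℝ) (u : ℕ) (f : X → ℝ) : X → ℝ :=
  fun x => ∫ x', f x' * (g (u + 1) x' * q x x') ∂ν

/-- The iterated kernel `Lpow n a f = L_a (L_{a+1} (⋯ (L_{a+n−1} f)))`
(the empty product, `n = 0`, being the identity). -/
def Lpow (ν : Measure X) (q : X → X → ℝ) (g : ℕ → X → ℝ) : ℕ → ℕ → (X → ℝ) → X → ℝ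
  | 0, _, f => f
  | n + 1, a, f => Lker ν q g a (fun x => Lpow ν q g n (a + 1) f x)

/-- The filter functionals: `filtF ν q g μ0 s k` is the filter `φ_{s+k}` as a functional,
initialised at `φ_s = μ0` and propagated through
`φ_{u+1}(f) = φ_u(L_u f) / φ_u(L_u 1)
           = [∬ f(x') g_{u+1}(x') q(x,x') ν(dx') φ_u(dx)] / [∬ g_{u+1}(x') q(x,x') ν(dx') φ_u(dx)]`. -/
def filtF (ν : Measure X) (q : X → X → ℝ) (g : ℕ → X → ℝ) (μ0 : Measure X) (s : ℕ) :
    ℕ → (X → ℝ) → ℝ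
  | 0 => fun f => ∫ x, f x ∂μ0
  | k + 1 => fun f =>
      filtF ν q g μ0 s k (Lker ν q g (s + k) f) /
        filtF ν q g μ0 s k (Lker ν q g (s + k) (fun _ => 1))

/-- The backward statistics `T_{s|s+k}` defined by `T_{s|s} = h` and
`T_{s|u+1}(y) = ∫ T_{s|u}(x) B_{φ_u}(y, dx) = φ_u(T_{s|u} q(·,y)) / φ_u(q(·,y))`. -/
def Tstat (ν : Measure X) (q : X → X → ℝ) (g : ℕ → X → ℝ) (μ0 : Measure X) (s : ℕ)
    (h : X → ℝ) : ℕ → X → ℝ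
  | 0 => h
  | k + 1 => fun y =>
      filtF ν q g μ0 s k (fun x => Tstat ν q g μ0 s h k x * q x y) /
        filtF ν q g μ0 s k (fun x => q x y)

namespace SMix

structure Hyp {X : Type*} [MeasurableSpace X] (ν : Measure X) (q : X → X → ℝ)
    (g : ℕ → X → ℝ) (εlo εhi δlo δhi : ℝ) : Prop where
  hq : Measurable (Function.uncurry q)
  hεlo : 0 < εlo
  hεhi : εlo < εhi
  hqb : ∀ x x', q x x' ∈ Set.Icc εlo εhi
  hg : ∀ u, Measurable (g u)
  hδlo : 0 < δlo
  hδ : δlo ≤ δhi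
  hgb : ∀ u x, g u x ∈ Set.Icc δlo δhi

variable {ν : Measure X} {q : X → X → ℝ} {g : ℕ → X → ℝ} {εlo εhi δlo δhi : ℝ}
  {μ0 : Measure X}

/-- `chi1` : upper bound for the kernel mass. -/
def chi1 (ν : Measure X) (εhi δhi : ℝ) : ℝ := εhi * δhi * (ν Set.univ).toReal

def clo1 (ν : Measure X) (εlo δlo : ℝ) : ℝ := εlo * δlo * (ν Set.univ).toReal

namespace Hyp

variable (H : Hyp ν q g εlo εhi δlo δhi)
include H

lemma q_fst (y : X) : Measurable fun x => q x y :=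
  H.hq.comp (measurable_id.prodMk measurable_const)

lemma q_snd (x : X) : Measurable fun y => q x y :=
  H.hq.comp (measurable_const.prodMk measurable_id)

lemma q_nonneg (x y : X) : 0 ≤ q x y := le_trans H.hεlo.le (H.hqb x y).1

lemma gq_nonneg (u : ℕ) (x x' : X) : 0 ≤ g u x' * q x x' :=
  mul_nonneg (le_trans H.hδlo.le (H.hgb u x').1) (H.q_nonneg x x')

lemma gq_le (u : ℕ) (x x' : X) : g u x' * q x x' ≤ δhi * εhi :=
  mul_le_mul (H.hgb u x').2 (H.hqb x x').2 (H.q_nonneg x x') (le_trans H.hδlo.le H.hδ)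

lemma gq_ge (u : ℕ) (x x' : X) : δlo * εlo ≤ g u x' * q x x' :=
  mul_le_mul (H.hgb u x').1 (H.hqb x x').1 H.hεlo.le (le_trans H.hδlo.le (H.hgb u x').1)

end Hyp

lemma integrable_of_bound {μ : Measure X} [IsFiniteMeasure μ] {f : X → ℝ} {M : ℝ}
    (hf : Measurable f) (hb : ∀ x, |f x| ≤ M) : Integrable f μ :=
  (integrable_const M).mono' hf.aestronglyMeasurable (ae_of_all _ fun x => by simpa using hb x)

namespace Hyp

variable [IsFiniteMeasure ν] (H : Hyp ν q g εlo εhi δlo δhi)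
include H

lemma integrable_ker {f : X → ℝ} {M : ℝ} (hf : Measurable f) (hb : ∀ x', |f x'| ≤ M)
    (u : ℕ) (x : X) :
    Integrable (fun x' => f x' * (g (u + 1) x' * q x x')) ν := by
  refine integrable_of_bound (hf.mul (((H.hg (u+1)).mul (H.q_snd x)))) (M := M * (δhi * εhi)) ?_
  intro x'
  rw [abs_mul, abs_of_nonneg (H.gq_nonneg (u+1) x x')]
  exact mul_le_mul (hb x') (H.gq_le (u+1) x x') (H.gq_nonneg (u+1) x x')
    (le_trans (abs_nonneg _) (hb x'))

lemma Lker_nonneg {f : X → ℝ} (hf : ∀ x, 0 ≤ f x) (u : ℕ) (x : X) :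
    0 ≤ Lker ν q g u f x :=
  integral_nonneg fun x' => mul_nonneg (hf x') (H.gq_nonneg (u+1) x x')

lemma Lker_mono {f f' : X → ℝ} {M M' : ℝ} (hf : Measurable f) (hb : ∀ x, |f x| ≤ M)
    (hf' : Measurable f') (hb' : ∀ x, |f' x| ≤ M') (hle : ∀ x, f x ≤ f' x) (u : ℕ) (x : X) :
    Lker ν q g u f x ≤ Lker ν q g u f' x :=
  integral_mono (H.integrable_ker hf hb u x) (H.integrable_ker hf' hb' u x)
    fun x' => mul_le_mul_of_nonneg_right (hle x') (H.gq_nonneg (u+1) x x')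

lemma Lker_const_mul (f : X → ℝ) (c : ℝ) (u : ℕ) (x : X) :
    Lker ν q g u (fun x => c * f x) x = c * Lker ν q g u f x := by
  simp only [Lker, mul_assoc]
  exact integral_const_mul c _

lemma Lker_sub {f f' : X → ℝ} {M M' : ℝ} (hf : Measurable f) (hb : ∀ x, |f x| ≤ M)
    (hf' : Measurable f') (hb' : ∀ x, |f' x| ≤ M') (u : ℕ) (x : X) :
    Lker ν q g u (fun x => f x - f' x) x = Lker ν q g u f x - Lker ν q g u f' x := by
  simp only [Lker, sub_mul]
  exact integral_sub (H.integrable_ker hf hb u x) (H.integrable_ker hf' hb' u x)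

end Hyp


variable {ν : Measure X} {q : X → X → ℝ} {g : ℕ → X → ℝ} {εlo εhi δlo δhi : ℝ}
  {μ0 : Measure X}
namespace Hyp
variable (H : Hyp ν q g εlo εhi δlo δhi)
include H

lemma εhi_pos : 0 < εhi := lt_trans H.hεlo H.hεhi
lemma δhi_pos : 0 < δhi := lt_of_lt_of_le H.hδlo H.hδ

lemma chi1_nonneg : 0 ≤ chi1 ν εhi δhi :=
  mul_nonneg (mul_nonneg H.εhi_pos.le H.δhi_pos.le) ENNReal.toReal_nonneg

variable [IsFiniteMeasure ν]

lemma lpow_param {Y : Type*} [MeasurableSpace Y] {F : X → Y → ℝ} {M : ℝ} (hM : 0 ≤ M)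
    (hF : Measurable fun p : X × Y => F p.1 p.2) (hb : ∀ x y, |F x y| ≤ M) :
    ∀ (n a : ℕ), (Measurable fun p : X × Y => Lpow ν q g n a (fun x => F x p.2) p.1) ∧
      (∀ x y, |Lpow ν q g n a (fun x => F x y) x| ≤ M * (chi1 ν εhi δhi) ^ n) := by
  intro n
  induction n with
  | zero => intro a; exact ⟨hF, by simpa [Lpow] using hb⟩
  | succ n IH =>
    intro a
    obtain ⟨IHm, IHb⟩ := IH (a + 1)
    have hMn : 0 ≤ M * chi1 ν εhi δhi ^ n := mul_nonneg hM (pow_nonneg H.chi1_nonneg n)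
    have hJ : Measurable fun p : (X × Y) × X =>
        Lpow ν q g n (a + 1) (fun x => F x p.1.2) p.2 * (g (a + 1) p.2 * q p.1.1 p.2) := by
      refine Measurable.mul ?_ (Measurable.mul ?_ ?_)
      · exact IHm.comp (measurable_snd.prodMk measurable_fst.snd)
      · exact (H.hg (a + 1)).comp measurable_snd
      · exact H.hq.comp (measurable_fst.fst.prodMk measurable_snd)
    constructor
    · have := MeasureTheory.StronglyMeasurable.integral_prod_right' (ν := ν)
        hJ.stronglyMeasurable
      exact this.measurable
    · intro x y
      have key : ∀ x', ‖Lpow ν q g n (a + 1) (fun x => F x y) x' * (g (a + 1) x' * q x x')‖ ≤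
          (M * chi1 ν εhi δhi ^ n) * (δhi * εhi) := by
        intro x'
        rw [Real.norm_eq_abs, abs_mul, abs_of_nonneg (H.gq_nonneg (a + 1) x x')]
        exact mul_le_mul (IHb x' y) (H.gq_le (a + 1) x x') (H.gq_nonneg (a + 1) x x') hMn
      have hle : ‖∫ x', Lpow ν q g n (a + 1) (fun x => F x y) x' * (g (a + 1) x' * q x x') ∂ν‖ ≤
          ∫ _x', (M * chi1 ν εhi δhi ^ n) * (δhi * εhi) ∂ν :=
        norm_integral_le_of_norm_le (integrable_const _) (ae_of_all _ key)
      rw [integral_const] at hle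
      calc |Lpow ν q g (n + 1) a (fun x => F x y) x| ≤
            (ν Set.univ).toReal • ((M * chi1 ν εhi δhi ^ n) * (δhi * εhi)) := hle
        _ = M * chi1 ν εhi δhi ^ (n + 1) := by
            simp only [smul_eq_mul, chi1, pow_succ]; ring

lemma lpow_meas {f : X → ℝ} {M : ℝ} (hM : 0 ≤ M) (hf : Measurable f) (hb : ∀ x, |f x| ≤ M)
    (n a : ℕ) : Measurable (Lpow ν q g n a f) ∧
      ∀ x, |Lpow ν q g n a f x| ≤ M * (chi1 ν εhi δhi) ^ n := by
  obtain ⟨hm, hbd⟩ := H.lpow_param (Y := Unit) hM (F := fun x _ => f x)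
    (hf.comp measurable_fst) (fun x _ => hb x) n a
  have h2 : Measurable fun x : X =>
      (fun p : X × Unit => Lpow ν q g n a (fun x => f x) p.1) (x, ()) :=
    hm.comp (measurable_id.prodMk measurable_const)
  exact ⟨h2, fun x => hbd x ()⟩

lemma lker_meas {f : X → ℝ} {M : ℝ} (hM : 0 ≤ M) (hf : Measurable f) (hb : ∀ x, |f x| ≤ M)
    (u : ℕ) : Measurable (Lker ν q g u f) ∧
      ∀ x, |Lker ν q g u f x| ≤ M * (chi1 ν εhi δhi) := by
  have := H.lpow_meas hM hf hb 1 u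
  simpa [Lpow] using this

lemma Lpow_const_mul (f : X → ℝ) (c : ℝ) : ∀ (n a : ℕ) (x : X),
    Lpow ν q g n a (fun x => c * f x) x = c * Lpow ν q g n a f x := by
  intro n
  induction n with
  | zero => intro a x; rfl
  | succ n IH =>
    intro a x
    show Lker ν q g a (fun x => Lpow ν q g n (a + 1) (fun x => c * f x) x) x = _
    have he : (fun x => Lpow ν q g n (a + 1) (fun x => c * f x) x) =
        fun x => c * Lpow ν q g n (a + 1) f x := funext fun x => IH (a + 1) x
    rw [he, H.Lker_const_mul]
    rfl

lemma Lpow_sub {f f' : X → ℝ} {M M' : ℝ} (hM : 0 ≤ M) (hM' : 0 ≤ M')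
    (hf : Measurable f) (hb : ∀ x, |f x| ≤ M)
    (hf' : Measurable f') (hb' : ∀ x, |f' x| ≤ M') : ∀ (n a : ℕ) (x : X),
    Lpow ν q g n a (fun x => f x - f' x) x = Lpow ν q g n a f x - Lpow ν q g n a f' x := by
  intro n
  induction n with
  | zero => intro a x; rfl
  | succ n IH =>
    intro a x
    show Lker ν q g a (fun x => Lpow ν q g n (a + 1) (fun x => f x - f' x) x) x = _
    have he : (fun x => Lpow ν q g n (a + 1) (fun x => f x - f' x) x) =
        fun x => Lpow ν q g n (a + 1) f x - Lpow ν q g n (a + 1) f' x :=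
      funext fun x => IH (a + 1) x
    rw [he, H.Lker_sub (H.lpow_meas hM hf hb n (a+1)).1 (H.lpow_meas hM hf hb n (a+1)).2
      (H.lpow_meas hM' hf' hb' n (a+1)).1 (H.lpow_meas hM' hf' hb' n (a+1)).2]
    rfl

lemma Lpow_mono {f f' : X → ℝ} {M M' : ℝ} (hM : 0 ≤ M) (hM' : 0 ≤ M')
    (hf : Measurable f) (hb : ∀ x, |f x| ≤ M)
    (hf' : Measurable f') (hb' : ∀ x, |f' x| ≤ M') (hle : ∀ x, f x ≤ f' x) :
    ∀ (n a : ℕ) (x : X), Lpow ν q g n a f x ≤ Lpow ν q g n a f' x := by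
  intro n
  induction n with
  | zero => intro a x; exact hle x
  | succ n IH =>
    intro a x
    exact H.Lker_mono (H.lpow_meas hM hf hb n (a+1)).1 (H.lpow_meas hM hf hb n (a+1)).2
      (H.lpow_meas hM' hf' hb' n (a+1)).1 (H.lpow_meas hM' hf' hb' n (a+1)).2
      (fun x' => IH (a + 1) x') a x

lemma Lpow_nonneg {f : X → ℝ} (hf : ∀ x, 0 ≤ f x) :
    ∀ (n a : ℕ) (x : X), 0 ≤ Lpow ν q g n a f x := by
  intro n
  induction n with
  | zero => intro a x; exact hf x
  | succ n IH =>
    intro a x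
    exact H.Lker_nonneg (fun x' => IH (a + 1) x') a x

lemma Lpow_lower {f : X → ℝ} {M c : ℝ} (hM : 0 ≤ M) (hc : 0 ≤ c)
    (hf : Measurable f) (hb : ∀ x, |f x| ≤ M) (hcf : ∀ x, c ≤ f x) :
    ∀ (n a : ℕ) (x : X), c * (clo1 ν εlo δlo) ^ n ≤ Lpow ν q g n a f x := by
  intro n
  induction n with
  | zero => intro a x; simpa [Lpow] using hcf x
  | succ n IH =>
    intro a x
    have hcn : 0 ≤ c * clo1 ν εlo δlo ^ n :=
      mul_nonneg hc (pow_nonneg (mul_nonneg (mul_nonneg H.hεlo.le H.hδlo.le)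
        ENNReal.toReal_nonneg) n)
    have key : ∀ x', (c * clo1 ν εlo δlo ^ n) * (δlo * εlo) ≤
        Lpow ν q g n (a + 1) f x' * (g (a + 1) x' * q x x') := by
      intro x'
      exact mul_le_mul (IH (a + 1) x') (H.gq_ge (a + 1) x x') (mul_pos H.hδlo H.hεlo).le
        (le_trans hcn (IH (a + 1) x'))
    have hint : Integrable (fun x' => Lpow ν q g n (a+1) f x' * (g (a + 1) x' * q x x')) ν :=
      H.integrable_ker (H.lpow_meas hM hf hb n (a+1)).1 (H.lpow_meas hM hf hb n (a+1)).2 a x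
    have := integral_mono (integrable_const ((c * clo1 ν εlo δlo ^ n) * (δlo * εlo))) hint key
    rw [integral_const] at this
    calc c * clo1 ν εlo δlo ^ (n + 1)
        = (ν Set.univ).toReal • ((c * clo1 ν εlo δlo ^ n) * (δlo * εlo)) := by
          simp only [smul_eq_mul, clo1, pow_succ]; ring
      _ ≤ Lpow ν q g (n + 1) a f x := this

lemma Lpow_succ_right (f : X → ℝ) : ∀ (n a : ℕ) (x : X),
    Lpow ν q g (n + 1) a f x = Lpow ν q g n a (Lker ν q g (a + n) f) x := by
  intro n
  induction n with
  | zero => intro a x; rfl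
  | succ n IH =>
    intro a x
    show Lker ν q g a (fun x' => Lpow ν q g (n + 1) (a + 1) f x') x = _
    have he : (fun x' => Lpow ν q g (n + 1) (a + 1) f x') =
        fun x' => Lpow ν q g n (a + 1) (Lker ν q g (a + 1 + n) f) x' :=
      funext fun x' => IH (a + 1) x'
    rw [he, show a + 1 + n = a + (n + 1) from by omega]
    rfl

end Hyp

/-- `Lam k f = μ0(Lpow k s f)`. -/
def Lam (ν : Measure X) (q : X → X → ℝ) (g : ℕ → X → ℝ) (μ0 : Measure X) (s k : ℕ)
    (f : X → ℝ) : ℝ := ∫ x, Lpow ν q g k s f x ∂μ0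

namespace Hyp
variable (H : Hyp ν q g εlo εhi δlo δhi)
include H
variable [IsFiniteMeasure ν] [IsProbabilityMeasure μ0] {s : ℕ}

lemma lam_integrable {f : X → ℝ} {M : ℝ} (hM : 0 ≤ M) (hf : Measurable f)
    (hb : ∀ x, |f x| ≤ M) (k : ℕ) : Integrable (Lpow ν q g k s f) μ0 :=
  integrable_of_bound (H.lpow_meas hM hf hb k s).1 (H.lpow_meas hM hf hb k s).2

lemma Lam_mono {f f' : X → ℝ} {M M' : ℝ} (hM : 0 ≤ M) (hM' : 0 ≤ M')
    (hf : Measurable f) (hb : ∀ x, |f x| ≤ M)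
    (hf' : Measurable f') (hb' : ∀ x, |f' x| ≤ M') (hle : ∀ x, f x ≤ f' x) (k : ℕ) :
    Lam ν q g μ0 s k f ≤ Lam ν q g μ0 s k f' :=
  integral_mono (H.lam_integrable hM hf hb k) (H.lam_integrable hM' hf' hb' k)
    fun x => H.Lpow_mono hM hM' hf hb hf' hb' hle k s x

lemma Lam_nonneg {f : X → ℝ} (hf : ∀ x, 0 ≤ f x) (k : ℕ) : 0 ≤ Lam ν q g μ0 s k f :=
  integral_nonneg fun x => H.Lpow_nonneg hf k s x

lemma Lam_const_mul (f : X → ℝ) (c : ℝ) (k : ℕ) :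
    Lam ν q g μ0 s k (fun x => c * f x) = c * Lam ν q g μ0 s k f := by
  unfold Lam
  have he : (fun x => Lpow ν q g k s (fun x => c * f x) x) =
      fun x => c * Lpow ν q g k s f x := funext fun x => H.Lpow_const_mul f c k s x
  rw [he, integral_const_mul]

lemma Lam_sub {f f' : X → ℝ} {M M' : ℝ} (hM : 0 ≤ M) (hM' : 0 ≤ M')
    (hf : Measurable f) (hb : ∀ x, |f x| ≤ M)
    (hf' : Measurable f') (hb' : ∀ x, |f' x| ≤ M') (k : ℕ) :
    Lam ν q g μ0 s k (fun x => f x - f' x) = Lam ν q g μ0 s k f - Lam ν q g μ0 s k f' := by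
  unfold Lam
  have he : (fun x => Lpow ν q g k s (fun x => f x - f' x) x) =
      fun x => Lpow ν q g k s f x - Lpow ν q g k s f' x :=
    funext fun x => H.Lpow_sub hM hM' hf hb hf' hb' k s x
  rw [he, integral_sub (H.lam_integrable hM hf hb k) (H.lam_integrable hM' hf' hb' k)]

lemma Lam_lower {f : X → ℝ} {M c : ℝ} (hM : 0 ≤ M) (hc : 0 ≤ c)
    (hf : Measurable f) (hb : ∀ x, |f x| ≤ M) (hcf : ∀ x, c ≤ f x) (k : ℕ) :
    c * (clo1 ν εlo δlo) ^ k ≤ Lam ν q g μ0 s k f := by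
  have := integral_mono (μ := μ0) (integrable_const (c * clo1 ν εlo δlo ^ k))
    (H.lam_integrable hM hf hb k) (fun x => H.Lpow_lower hM hc hf hb hcf k s x)
  rwa [integral_const, probReal_univ, one_smul] at this

lemma lam_param_meas {Y : Type*} [MeasurableSpace Y] {F : X → Y → ℝ} {M : ℝ} (hM : 0 ≤ M)
    (hF : Measurable fun p : X × Y => F p.1 p.2) (hb : ∀ x y, |F x y| ≤ M) (k : ℕ) :
    Measurable fun z => Lam ν q g μ0 s k (fun x => F x z) := by
  obtain ⟨hm, _⟩ := H.lpow_param hM hF hb k s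
  have hswap : Measurable fun p : Y × X => Lpow ν q g k s (fun x => F x p.1) p.2 :=
    hm.comp (measurable_snd.prodMk measurable_fst)
  have := MeasureTheory.StronglyMeasurable.integral_prod_right' (ν := μ0)
    hswap.stronglyMeasurable
  exact this.measurable

lemma clo1_pos (hnr : 0 < (ν Set.univ).toReal) : 0 < clo1 ν εlo δlo :=
  mul_pos (mul_pos H.hεlo H.hδlo) hnr

lemma lam_one_pos (hnr : 0 < (ν Set.univ).toReal) (k : ℕ) :
    0 < Lam ν q g μ0 s k (fun _ => 1) := by
  have := H.Lam_lower (M := 1) (c := 1) (μ0 := μ0) (s := s) zero_le_one zero_le_one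
    measurable_const (fun x => by norm_num) (fun x => le_refl 1) k
  have h2 : 0 < (1 : ℝ) * clo1 ν εlo δlo ^ k := by
    rw [one_mul]; exact pow_pos (H.clo1_pos hnr) k
  linarith

lemma lam_pos_of_lower {f : X → ℝ} {M c : ℝ} (hM : 0 ≤ M) (hc : 0 < c)
    (hnr : 0 < (ν Set.univ).toReal)
    (hf : Measurable f) (hb : ∀ x, |f x| ≤ M) (hcf : ∀ x, c ≤ f x) (k : ℕ) :
    0 < Lam ν q g μ0 s k f := by
  have := H.Lam_lower (μ0 := μ0) (s := s) hM hc.le hf hb hcf k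
  have h2 : 0 < c * clo1 ν εlo δlo ^ k := mul_pos hc (pow_pos (H.clo1_pos hnr) k)
  linarith

lemma lam_q_pos (hnr : 0 < (ν Set.univ).toReal) (k : ℕ) (y : X) :
    0 < Lam ν q g μ0 s k (fun x => q x y) :=
  H.lam_pos_of_lower (M := εhi) H.εhi_pos.le H.hεlo hnr (H.q_fst y)
    (fun x => abs_le.mpr ⟨by linarith [(H.hqb x y).1, H.hεlo, H.εhi_pos], (H.hqb x y).2⟩)
    (fun x => (H.hqb x y).1) k

lemma ratio_sandwich {f w : X → ℝ} {lo hi Mw : ℝ} (hMw : 0 ≤ Mw)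
    (hf : Measurable f) (hfi : ∀ x, f x ∈ Set.Icc lo hi)
    (hw : Measurable w) (hwb : ∀ x, |w x| ≤ Mw) (hw0 : ∀ x, 0 ≤ w x) {k : ℕ}
    (hpos : 0 < Lam ν q g μ0 s k w) :
    Lam ν q g μ0 s k (fun x => f x * w x) / Lam ν q g μ0 s k w ∈ Set.Icc lo hi := by
  set M : ℝ := |lo| ⊔ |hi| with hMdef
  have hM : 0 ≤ M := le_trans (abs_nonneg lo) le_sup_left
  have hloM : -M ≤ lo := by
    have h1 : |lo| ≤ M := le_sup_left
    linarith [neg_abs_le lo]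
  have hhiM : hi ≤ M := le_trans (le_abs_self hi) le_sup_right
  have hfb : ∀ x, |f x| ≤ M := fun x => abs_le.mpr
    ⟨le_trans hloM (hfi x).1, le_trans (hfi x).2 hhiM⟩
  have hfwm : Measurable fun x => f x * w x := hf.mul hw
  have hfwb : ∀ x, |f x * w x| ≤ M * Mw := fun x => by
    rw [abs_mul]; exact mul_le_mul (hfb x) (hwb x) (abs_nonneg _) hM
  constructor
  · rw [le_div_iff₀ hpos]
    have e1 : Lam ν q g μ0 s k (fun x => f x * w x - lo * w x) =
        Lam ν q g μ0 s k (fun x => f x * w x) - lo * Lam ν q g μ0 s k w := by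
      rw [H.Lam_sub (f' := fun x => lo * w x) (M := M * Mw) (M' := |lo| * Mw) (mul_nonneg hM hMw)
        (mul_nonneg (abs_nonneg lo) hMw) hfwm hfwb (measurable_const.mul hw)
        (fun x => by rw [abs_mul]; exact mul_le_mul_of_nonneg_left (hwb x) (abs_nonneg lo)),
        H.Lam_const_mul]
    have e2 : 0 ≤ Lam ν q g μ0 s k (fun x => f x * w x - lo * w x) :=
      H.Lam_nonneg (fun x => by
        have : f x * w x - lo * w x = (f x - lo) * w x := by ring
        rw [this]; exact mul_nonneg (by linarith [(hfi x).1]) (hw0 x)) k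
    linarith [e2, e1.symm.le]
  · rw [div_le_iff₀ hpos]
    have e1 : Lam ν q g μ0 s k (fun x => hi * w x - f x * w x) =
        hi * Lam ν q g μ0 s k w - Lam ν q g μ0 s k (fun x => f x * w x) := by
      rw [H.Lam_sub (f := fun x => hi * w x) (M := |hi| * Mw) (M' := M * Mw)
        (mul_nonneg (abs_nonneg hi) hMw) (mul_nonneg hM hMw)
        (measurable_const.mul hw)
        (fun x => by rw [abs_mul]; exact mul_le_mul_of_nonneg_left (hwb x) (abs_nonneg hi))
        hfwm hfwb, H.Lam_const_mul]
    have e2 : 0 ≤ Lam ν q g μ0 s k (fun x => hi * w x - f x * w x) :=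
      H.Lam_nonneg (fun x => by
        have : hi * w x - f x * w x = (hi - f x) * w x := by ring
        rw [this]; exact mul_nonneg (by linarith [(hfi x).2]) (hw0 x)) k
    linarith [e2, e1.symm.le]

/-- Minorisation: for `f ≥ 0`,
`(εlo/εhi) · Λf · Λq_y ≤ Λ(f·q_y) · Λ1`. -/
lemma lam_minor {f : X → ℝ} {M : ℝ} (hM : 0 ≤ M) (hf : Measurable f)
    (hb : ∀ x, |f x| ≤ M) (h0 : ∀ x, 0 ≤ f x) (k : ℕ) (y : X) :
    (εlo / εhi) * (Lam ν q g μ0 s k f * Lam ν q g μ0 s k (fun x => q x y)) ≤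
      Lam ν q g μ0 s k (fun x => f x * q x y) * Lam ν q g μ0 s k (fun _ => 1) := by
  have hq1 : ∀ x, |q x y| ≤ εhi := fun x => abs_le.mpr
    ⟨by linarith [(H.hqb x y).1, H.hεlo, H.εhi_pos], (H.hqb x y).2⟩
  have hZ : (0:ℝ) ≤ Lam ν q g μ0 s k (fun _ => 1) :=
    H.Lam_nonneg (fun _ => zero_le_one) k
  have hF : (0:ℝ) ≤ Lam ν q g μ0 s k f := H.Lam_nonneg h0 k
  -- step 1 : εlo * Λ f ≤ Λ (f q_y)
  have s1 : εlo * Lam ν q g μ0 s k f ≤ Lam ν q g μ0 s k (fun x => f x * q x y) := by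
    rw [← H.Lam_const_mul]
    exact H.Lam_mono (f := fun x => εlo * f x) (f' := fun x => f x * q x y) (M := εlo * M) (M' := M * εhi)
      (mul_nonneg H.hεlo.le hM) (mul_nonneg hM H.εhi_pos.le)
      (measurable_const.mul hf)
      (fun x => by
        rw [abs_mul, abs_of_nonneg H.hεlo.le]
        exact mul_le_mul_of_nonneg_left (hb x) H.hεlo.le)
      (hf.mul (H.q_fst y))
      (fun x => by rw [abs_mul]; exact mul_le_mul (hb x) (hq1 x) (abs_nonneg _) hM)
      (fun x => by
        rw [mul_comm]
        exact mul_le_mul_of_nonneg_left (H.hqb x y).1 (h0 x)) k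
  -- step 2 : Λ q_y ≤ εhi * Λ 1
  have s2 : Lam ν q g μ0 s k (fun x => q x y) ≤ εhi * Lam ν q g μ0 s k (fun _ => 1) := by
    rw [← H.Lam_const_mul]
    exact H.Lam_mono (M := εhi) (M' := εhi)
      H.εhi_pos.le H.εhi_pos.le (H.q_fst y) hq1
      measurable_const (fun x => by rw [mul_one]; exact (abs_le.mpr ⟨by linarith [H.εhi_pos],
        le_refl εhi⟩))
      (fun x => by rw [mul_one]; exact (H.hqb x y).2) k
  have hεhi0 : (0:ℝ) < εhi := H.εhi_pos
  calc (εlo / εhi) * (Lam ν q g μ0 s k f * Lam ν q g μ0 s k (fun x => q x y))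
      ≤ (εlo / εhi) * (Lam ν q g μ0 s k f * (εhi * Lam ν q g μ0 s k (fun _ => 1))) := by
        apply mul_le_mul_of_nonneg_left _ (div_nonneg H.hεlo.le hεhi0.le)
        exact mul_le_mul_of_nonneg_left s2 hF
    _ = (εlo * Lam ν q g μ0 s k f) * Lam ν q g μ0 s k (fun _ => 1) := by
        field_simp
    _ ≤ Lam ν q g μ0 s k (fun x => f x * q x y) * Lam ν q g μ0 s k (fun _ => 1) :=
        mul_le_mul_of_nonneg_right s1 hZ

/-- Expansion helpers. -/
lemma lam_shift {f : X → ℝ} {M : ℝ} (hM : 0 ≤ M) (hf : Measurable f)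
    (hb : ∀ x, |f x| ≤ M) (c : ℝ) (k : ℕ) :
    Lam ν q g μ0 s k (fun x => c - f x) =
      c * Lam ν q g μ0 s k (fun _ => 1) - Lam ν q g μ0 s k f := by
  have e0 : (fun x : X => c - f x) = fun x => (fun x : X => c * 1) x - f x := by
    funext x; rw [mul_one]
  rw [e0, H.Lam_sub (M := |c|) (M' := M) (abs_nonneg c) hM measurable_const
    (fun x => by rw [mul_one]) hf hb, H.Lam_const_mul]

lemma lam_shift_q {f : X → ℝ} {M : ℝ} (hM : 0 ≤ M) (hf : Measurable f)
    (hb : ∀ x, |f x| ≤ M) (c : ℝ) (k : ℕ) (y : X) :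
    Lam ν q g μ0 s k (fun x => (c - f x) * q x y) =
      c * Lam ν q g μ0 s k (fun x => q x y) - Lam ν q g μ0 s k (fun x => f x * q x y) := by
  have hq1 : ∀ x, |q x y| ≤ εhi := fun x => abs_le.mpr
    ⟨by linarith [(H.hqb x y).1, H.hεlo, H.εhi_pos], (H.hqb x y).2⟩
  have e0 : (fun x : X => (c - f x) * q x y) =
      fun x => (fun x : X => c * q x y) x - (fun x : X => f x * q x y) x := by
    funext x; ring
  rw [e0, H.Lam_sub (f := fun x => c * q x y) (f' := fun x => f x * q x y) (M := |c| * εhi) (M' := M * εhi)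
    (mul_nonneg (abs_nonneg c) H.εhi_pos.le) (mul_nonneg hM H.εhi_pos.le)
    (measurable_const.mul (H.q_fst y))
    (fun x => by rw [abs_mul]; exact mul_le_mul_of_nonneg_left (hq1 x) (abs_nonneg c))
    (hf.mul (H.q_fst y))
    (fun x => by rw [abs_mul]; exact mul_le_mul (hb x) (hq1 x) (abs_nonneg _) hM),
    H.Lam_const_mul]

/-- One-sided affine upper bound for the backward kernel. -/
lemma Ky_le (hnr : 0 < (ν Set.univ).toReal) {f : X → ℝ} {lo hi : ℝ}
    (hf : Measurable f) (hfi : ∀ x, f x ∈ Set.Icc lo hi) (k : ℕ) (y : X) :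
    Lam ν q g μ0 s k (fun x => f x * q x y) / Lam ν q g μ0 s k (fun x => q x y) ≤
      (1 - εlo / εhi) * hi + (εlo / εhi) *
        (Lam ν q g μ0 s k f / Lam ν q g μ0 s k (fun _ => 1)) := by
  set M : ℝ := |lo| ⊔ |hi| with hMdef
  have hM : 0 ≤ M := le_trans (abs_nonneg lo) le_sup_left
  have hloM : -M ≤ lo := by
    have h1 : |lo| ≤ M := le_sup_left
    linarith [neg_abs_le lo]
  have hhiM : hi ≤ M := le_trans (le_abs_self hi) le_sup_right
  have hfb : ∀ x, |f x| ≤ M := fun x => abs_le.mpr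
    ⟨le_trans hloM (hfi x).1, le_trans (hfi x).2 hhiM⟩
  have hB : 0 < Lam ν q g μ0 s k (fun x => q x y) := H.lam_q_pos hnr k y
  have hZ : 0 < Lam ν q g μ0 s k (fun _ => 1) := H.lam_one_pos hnr k
  -- minorisation applied to hi - f
  have hm2 : ∀ x, |hi - f x| ≤ |hi| + M := fun x => by
    have := abs_sub (a := hi) (b := f x)
    calc |hi - f x| ≤ |hi| + |f x| := abs_sub _ _
      _ ≤ |hi| + M := by linarith [hfb x]
  have minor := H.lam_minor (μ0 := μ0) (s := s) (f := fun x => hi - f x) (M := |hi| + M) (by positivity)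
    (measurable_const.sub hf) hm2 (fun x => by linarith [(hfi x).2]) k y
  rw [H.lam_shift hM hf hfb, H.lam_shift_q hM hf hfb] at minor
  set r : ℝ := εlo / εhi with hrdef
  set A : ℝ := Lam ν q g μ0 s k (fun x => f x * q x y)
  set B : ℝ := Lam ν q g μ0 s k (fun x => q x y)
  set F : ℝ := Lam ν q g μ0 s k f
  set Z : ℝ := Lam ν q g μ0 s k (fun _ => 1)
  rw [div_le_iff₀ hB]
  have hz : F / Z * Z = F := div_mul_cancel₀ F (ne_of_gt hZ)
  have key : A * Z ≤ ((1 - r) * hi * B + r * (F / Z) * B) * Z := by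
    have e4 : ((1 - r) * hi * B + r * (F / Z) * B) * Z =
        (1 - r) * hi * B * Z + r * (F / Z * Z) * B := by ring
    rw [e4, hz]
    nlinarith [minor]
  have key2 : A ≤ (1 - r) * hi * B + r * (F / Z) * B :=
    le_of_mul_le_mul_right key hZ
  nlinarith [key2]

/-- One-sided affine lower bound for the backward kernel. -/
lemma Ky_ge (hnr : 0 < (ν Set.univ).toReal) {f : X → ℝ} {lo hi : ℝ}
    (hf : Measurable f) (hfi : ∀ x, f x ∈ Set.Icc lo hi) (k : ℕ) (y : X) :
    (1 - εlo / εhi) * lo + (εlo / εhi) *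
        (Lam ν q g μ0 s k f / Lam ν q g μ0 s k (fun _ => 1)) ≤
      Lam ν q g μ0 s k (fun x => f x * q x y) / Lam ν q g μ0 s k (fun x => q x y) := by
  set M : ℝ := |lo| ⊔ |hi| with hMdef
  have hM : 0 ≤ M := le_trans (abs_nonneg lo) le_sup_left
  have hloM : -M ≤ lo := by
    have h1 : |lo| ≤ M := le_sup_left
    linarith [neg_abs_le lo]
  have hhiM : hi ≤ M := le_trans (le_abs_self hi) le_sup_right
  have hfb : ∀ x, |f x| ≤ M := fun x => abs_le.mpr
    ⟨le_trans hloM (hfi x).1, le_trans (hfi x).2 hhiM⟩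
  have hB : 0 < Lam ν q g μ0 s k (fun x => q x y) := H.lam_q_pos hnr k y
  have hZ : 0 < Lam ν q g μ0 s k (fun _ => 1) := H.lam_one_pos hnr k
  have hm2 : ∀ x, |f x - lo| ≤ M + |lo| := fun x => by
    calc |f x - lo| ≤ |f x| + |lo| := abs_sub _ _
      _ ≤ M + |lo| := by linarith [hfb x]
  have minor := H.lam_minor (μ0 := μ0) (s := s) (f := fun x => f x - lo) (M := M + |lo|) (by positivity)
    (hf.sub measurable_const) hm2 (fun x => by linarith [(hfi x).1]) k y
  have e1 : (fun x => f x - lo) = fun x => -((fun x : X => lo - f x) x) := by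
    funext x; ring
  have e2 : (fun x => (f x - lo) * q x y) =
      fun x => -((fun x : X => (lo - f x) * q x y) x) := by
    funext x; ring
  have eA : Lam ν q g μ0 s k (fun x => f x - lo) =
      Lam ν q g μ0 s k f - lo * Lam ν q g μ0 s k (fun _ => 1) := by
    have := H.lam_shift (μ0 := μ0) (s := s) hM hf hfb lo k
    have eneg : Lam ν q g μ0 s k (fun x => f x - lo) =
        - Lam ν q g μ0 s k (fun x => lo - f x) := by
      rw [e1]
      have : (fun x => -((fun x : X => lo - f x) x)) =
          fun x => (-1 : ℝ) * ((fun x : X => lo - f x) x) := by funext x; ring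
      rw [this, H.Lam_const_mul]; ring
    rw [eneg, this]; ring
  have eB : Lam ν q g μ0 s k (fun x => (f x - lo) * q x y) =
      Lam ν q g μ0 s k (fun x => f x * q x y) -
        lo * Lam ν q g μ0 s k (fun x => q x y) := by
    have := H.lam_shift_q (μ0 := μ0) (s := s) hM hf hfb lo k y
    have eneg : Lam ν q g μ0 s k (fun x => (f x - lo) * q x y) =
        - Lam ν q g μ0 s k (fun x => (lo - f x) * q x y) := by
      rw [e2]
      have : (fun x => -((fun x : X => (lo - f x) * q x y) x)) =
          fun x => (-1 : ℝ) * ((fun x : X => (lo - f x) * q x y) x) := by funext x; ring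
      rw [this, H.Lam_const_mul]; ring
    rw [eneg, this]; ring
  rw [eA, eB] at minor
  set r : ℝ := εlo / εhi with hrdef
  set A : ℝ := Lam ν q g μ0 s k (fun x => f x * q x y)
  set B : ℝ := Lam ν q g μ0 s k (fun x => q x y)
  set F : ℝ := Lam ν q g μ0 s k f
  set Z : ℝ := Lam ν q g μ0 s k (fun _ => 1)
  rw [le_div_iff₀ hB]
  have hz : F / Z * Z = F := div_mul_cancel₀ F (ne_of_gt hZ)
  have key : ((1 - r) * lo * B + r * (F / Z) * B) * Z ≤ A * Z := by
    have e4 : ((1 - r) * lo * B + r * (F / Z) * B) * Z =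
        (1 - r) * lo * B * Z + r * (F / Z * Z) * B := by ring
    rw [e4, hz]
    nlinarith [minor]
  have key2 : (1 - r) * lo * B + r * (F / Z) * B ≤ A :=
    le_of_mul_le_mul_right key hZ
  nlinarith [key2]

/-- Dobrushin contraction of the backward kernel. -/
lemma Ky_contract (hnr : 0 < (ν Set.univ).toReal) {f : X → ℝ} {lo hi : ℝ}
    (hf : Measurable f) (hfi : ∀ x, f x ∈ Set.Icc lo hi) (k : ℕ) (y y' : X) :
    Lam ν q g μ0 s k (fun x => f x * q x y) / Lam ν q g μ0 s k (fun x => q x y) -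
      Lam ν q g μ0 s k (fun x => f x * q x y') / Lam ν q g μ0 s k (fun x => q x y') ≤
        (1 - εlo / εhi) * (hi - lo) := by
  have h1 := H.Ky_le (μ0 := μ0) (s := s) hnr hf hfi k y
  have h2 := H.Ky_ge (μ0 := μ0) (s := s) hnr hf hfi k y'
  linarith [h1, h2]

/-- `filtF` as a ratio of the linear functionals `Lam`. -/
lemma filtF_eq (hnr : 0 < (ν Set.univ).toReal) :
    ∀ (k : ℕ) {f : X → ℝ} {M : ℝ}, 0 ≤ M → Measurable f → (∀ x, |f x| ≤ M) →
      filtF ν q g μ0 s k f = Lam ν q g μ0 s k f / Lam ν q g μ0 s k (fun _ => 1) := by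
  intro k
  induction k with
  | zero =>
    intro f M hM hf hb
    show (∫ x, f x ∂μ0) = (∫ x, f x ∂μ0) / ∫ x, (1:ℝ) ∂μ0
    rw [integral_const, probReal_univ, one_smul, div_one]
  | succ k IH =>
    intro f M hM hf hb
    have hLm := H.lker_meas hM hf hb (s + k)
    have hL1 := H.lker_meas (M := 1) (f := fun _ => (1:ℝ)) zero_le_one measurable_const
      (fun x => by norm_num) (s + k)
    have e1 : filtF ν q g μ0 s (k+1) f =
        filtF ν q g μ0 s k (Lker ν q g (s + k) f) /
          filtF ν q g μ0 s k (Lker ν q g (s + k) (fun _ => 1)) := rfl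
    rw [e1, IH (mul_nonneg hM H.chi1_nonneg) hLm.1 hLm.2,
      IH (mul_nonneg zero_le_one H.chi1_nonneg) hL1.1 hL1.2]
    have hZ : Lam ν q g μ0 s k (fun _ => 1) ≠ 0 := ne_of_gt (H.lam_one_pos hnr k)
    rw [div_div_div_comm, div_self hZ, div_one]
    congr 1
    · unfold Lam
      congr 1
      funext x
      exact (H.Lpow_succ_right f k s x).symm
    · unfold Lam
      congr 1
      funext x
      exact (H.Lpow_succ_right (fun _ => 1) k s x).symm

/-- One-step identity for the backward statistics. -/
lemma Tstat_succ_eq (hnr : 0 < (ν Set.univ).toReal) {h : X → ℝ} {k : ℕ} {M : ℝ}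
    (hM : 0 ≤ M) (hTm : Measurable (Tstat ν q g μ0 s h k))
    (hTb : ∀ x, |Tstat ν q g μ0 s h k x| ≤ M) (y : X) :
    Tstat ν q g μ0 s h (k + 1) y =
      Lam ν q g μ0 s k (fun x => Tstat ν q g μ0 s h k x * q x y) /
        Lam ν q g μ0 s k (fun x => q x y) := by
  have hq1 : ∀ x, |q x y| ≤ εhi := fun x => abs_le.mpr
    ⟨by linarith [(H.hqb x y).1, H.hεlo, H.εhi_pos], (H.hqb x y).2⟩
  have e1 : Tstat ν q g μ0 s h (k + 1) y =
      filtF ν q g μ0 s k (fun x => Tstat ν q g μ0 s h k x * q x y) /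
        filtF ν q g μ0 s k (fun x => q x y) := rfl
  rw [e1, H.filtF_eq hnr k (f := fun x => Tstat ν q g μ0 s h k x * q x y) (M := M * εhi) (mul_nonneg hM H.εhi_pos.le)
      (hTm.mul (H.q_fst y))
      (fun x => by rw [abs_mul]; exact mul_le_mul (hTb x) (hq1 x) (abs_nonneg _) hM),
    H.filtF_eq hnr k (M := εhi) H.εhi_pos.le (H.q_fst y) hq1]
  have hZ : Lam ν q g μ0 s k (fun _ => 1) ≠ 0 := ne_of_gt (H.lam_one_pos hnr k)
  rw [div_div_div_comm, div_self hZ, div_one]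

lemma r_nonneg : 0 ≤ εlo / εhi := div_nonneg H.hεlo.le H.εhi_pos.le

lemma one_sub_r_nonneg : 0 ≤ 1 - εlo / εhi := by
  have : εlo / εhi ≤ 1 := (div_le_one H.εhi_pos).mpr H.hεhi.le
  linarith

/-- Main induction on the backward statistics: measurability and
oscillation bounds. -/
lemma Tfact (hnr : 0 < (ν Set.univ).toReal) [Nonempty X] {h : X → ℝ} {C hinf : ℝ}
    (hh : Measurable h) (hC : ∀ x, |h x| ≤ C)
    (hosc : ∀ x x', |h x - h x'| ≤ hinf) :
    ∀ k : ℕ, Measurable (Tstat ν q g μ0 s h k) ∧ ∃ lo hi : ℝ,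
      (∀ x, Tstat ν q g μ0 s h k x ∈ Set.Icc lo hi) ∧
        hi - lo ≤ (1 - εlo / εhi) ^ k * hinf := by
  intro k
  induction k with
  | zero =>
    refine ⟨hh, sInf (Set.range h), sSup (Set.range h), ?_, ?_⟩
    · intro x
      have hbdd_b : BddBelow (Set.range h) := ⟨-C, by
        rintro y ⟨x', rfl⟩; linarith [(abs_le.mp (hC x')).1]⟩
      have hbdd_a : BddAbove (Set.range h) := ⟨C, by
        rintro y ⟨x', rfl⟩; exact (abs_le.mp (hC x')).2⟩
      exact ⟨csInf_le hbdd_b ⟨x, rfl⟩, le_csSup hbdd_a ⟨x, rfl⟩⟩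
    · have hne : (Set.range h).Nonempty := Set.range_nonempty h
      rw [pow_zero, one_mul]
      have key : sSup (Set.range h) ≤ sInf (Set.range h) + hinf := by
        apply csSup_le hne
        rintro y ⟨x, rfl⟩
        have h2 : h x - hinf ≤ sInf (Set.range h) := by
          apply le_csInf hne
          rintro y' ⟨x', rfl⟩
          linarith [(abs_le.mp (hosc x x')).2]
        linarith
      linarith
  | succ k IH =>
    obtain ⟨hTm, lo, hi, hTi, hctr⟩ := IH
    set T := Tstat ν q g μ0 s h k with hTdef
    set M : ℝ := |lo| ⊔ |hi| with hMdef
    have hM : 0 ≤ M := le_trans (abs_nonneg lo) le_sup_left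
    have hloM : -M ≤ lo := by
      have h1 : |lo| ≤ M := le_sup_left
      linarith [neg_abs_le lo]
    have hhiM : hi ≤ M := le_trans (le_abs_self hi) le_sup_right
    have hTb : ∀ x, |T x| ≤ M := fun x => abs_le.mpr
      ⟨le_trans hloM (hTi x).1, le_trans (hTi x).2 hhiM⟩
    have hq1 : ∀ (x y : X), |q x y| ≤ εhi := fun x y => abs_le.mpr
      ⟨by linarith [(H.hqb x y).1, H.hεlo, H.εhi_pos], (H.hqb x y).2⟩
    have hsucc : ∀ y, Tstat ν q g μ0 s h (k + 1) y =
        Lam ν q g μ0 s k (fun x => T x * q x y) /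
          Lam ν q g μ0 s k (fun x => q x y) :=
      fun y => H.Tstat_succ_eq hnr hM hTm hTb y
    constructor
    · have hfe : Tstat ν q g μ0 s h (k + 1) = fun y =>
          Lam ν q g μ0 s k (fun x => T x * q x y) /
            Lam ν q g μ0 s k (fun x => q x y) := funext hsucc
      rw [hfe]
      have hnum : Measurable fun y => Lam ν q g μ0 s k (fun x => T x * q x y) := by
        apply H.lam_param_meas (M := M * εhi) (mul_nonneg hM H.εhi_pos.le)
        · exact (hTm.comp measurable_fst).mul H.hq
        · intro x y
          rw [abs_mul]
          exact mul_le_mul (hTb x) (hq1 x y) (abs_nonneg _) hM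
      have hden : Measurable fun y => Lam ν q g μ0 s k (fun x => q x y) := by
        apply H.lam_param_meas (M := εhi) H.εhi_pos.le H.hq
        intro x y; exact hq1 x y
      exact hnum.div hden
    · have hsand : ∀ y, Tstat ν q g μ0 s h (k + 1) y ∈ Set.Icc lo hi := by
        intro y
        rw [hsucc y]
        exact H.ratio_sandwich H.εhi_pos.le hTm hTi (H.q_fst y) (fun x => hq1 x y)
          (fun x => H.q_nonneg x y) (H.lam_q_pos hnr k y)
      have hcon : ∀ y y', Tstat ν q g μ0 s h (k + 1) y - Tstat ν q g μ0 s h (k + 1) y' ≤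
          (1 - εlo / εhi) * (hi - lo) := by
        intro y y'
        rw [hsucc y, hsucc y']
        exact H.Ky_contract hnr hTm hTi k y y'
      set T' := Tstat ν q g μ0 s h (k + 1) with hT'def
      have hne : (Set.range T').Nonempty := Set.range_nonempty T'
      have hbdd_b : BddBelow (Set.range T') := ⟨lo, by rintro y ⟨x', rfl⟩; exact (hsand x').1⟩
      have hbdd_a : BddAbove (Set.range T') := ⟨hi, by rintro y ⟨x', rfl⟩; exact (hsand x').2⟩
      refine ⟨sInf (Set.range T'), sSup (Set.range T'), fun x =>
        ⟨csInf_le hbdd_b ⟨x, rfl⟩, le_csSup hbdd_a ⟨x, rfl⟩⟩, ?_⟩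
      have key : sSup (Set.range T') ≤ sInf (Set.range T') + (1 - εlo / εhi) * (hi - lo) := by
        apply csSup_le hne
        rintro y ⟨x, rfl⟩
        have h2 : T' x - (1 - εlo / εhi) * (hi - lo) ≤ sInf (Set.range T') := by
          apply le_csInf hne
          rintro y' ⟨x', rfl⟩
          linarith [hcon x x']
        linarith
      have hmul : (1 - εlo / εhi) * (hi - lo) ≤
          (1 - εlo / εhi) * ((1 - εlo / εhi) ^ k * hinf) :=
        mul_le_mul_of_nonneg_left hctr H.one_sub_r_nonneg
      calc sSup (Set.range T') - sInf (Set.range T') ≤ (1 - εlo / εhi) * (hi - lo) := by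
            linarith
        _ ≤ (1 - εlo / εhi) ^ (k + 1) * hinf := by
            rw [pow_succ]
            calc (1 - εlo / εhi) * (hi - lo) ≤
                (1 - εlo / εhi) * ((1 - εlo / εhi) ^ k * hinf) := hmul
              _ = (1 - εlo / εhi) ^ k * (1 - εlo / εhi) * hinf := by ring

end Hyp
end SMix


open SMix in
/-- the bound on the limiting variance criterion
`σ_{s|t} = φ_t((T_{s|t} − φ_t(T_{s|t}))²) + η_{s,t}` (Theorem 2 of the paper). -/
theorem stmt0
    (ν : Measure X) [IsFiniteMeasure ν] (hν : ν ≠ 0)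
    (q : X → X → ℝ) (hq : Measurable (Function.uncurry q))
    (εlo εhi : ℝ) (hεlo : 0 < εlo) (hεhi : εlo < εhi)
    (hqb : ∀ x x', q x x' ∈ Set.Icc εlo εhi)
    (g : ℕ → X → ℝ) (hg : ∀ u, Measurable (g u))
    (δlo δhi : ℝ) (hδlo : 0 < δlo) (hδ : δlo ≤ δhi)
    (hgb : ∀ u x, g u x ∈ Set.Icc δlo δhi)
    (ρ : ℝ) (hρ : ρ = 1 - εlo / εhi)
    (s t : ℕ) (hst : s ≤ t)
    (h : X → ℝ) (hh : Measurable h) (C : ℝ) (hhb : ∀ x, |h x| ≤ C)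
    (hinf : ℝ) (hosc : osc h ≤ hinf)
    (K : ℕ) (hK : 1 ≤ K)
    (μ0 : Measure X) [IsProbabilityMeasure μ0]
    -- the filters `φ_u`, the statistics `T_{s|u}`, the functions `w_ℓ`,
    -- the remainder `η_{s,t}` and the limiting variance criterion `σ_{s|t}`:
    (Phi : ℕ → (X → ℝ) → ℝ) (hPhi : Phi = fun u => filtF ν q g μ0 s (u - s))
    (T : ℕ → X → ℝ) (hT : T = fun u => Tstat ν q g μ0 s h (u - s))
    (w : ℕ → X → ℝ)
    (hw : w = fun ℓ z =>
      Phi ℓ (fun x => (T ℓ x - T (ℓ + 1) z) ^ 2 * q x z) / Phi ℓ (fun x => q x z))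
    (η : ℝ)
    (hη : η = ∑ ℓ ∈ Finset.Ico s t,
      (K : ℝ) ^ ((ℓ : ℤ) - (t : ℤ)) *
        (Phi ℓ (Lker ν q g ℓ
            (fun x => w ℓ x * Lpow ν q g (t - 1 - ℓ) (ℓ + 1) (fun _ => 1) x)) /
          Phi ℓ (Lpow ν q g (t - ℓ) ℓ (fun _ => 1))))
    (σ : ℝ)
    (hσ : σ = Phi t (fun x => (T t x - Phi t (T t)) ^ 2) + η)
    (c₁ c₂ c₃ : ℝ)
    (hc₁ : c₁ = 1 - 4 / ((1 - ρ) * (1 - (K : ℝ) * ρ ^ 2)))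
    (hc₂ : c₂ = 4 / ((1 - ρ) * (1 - (K : ℝ) * ρ ^ 2)))
    (hc₃ : c₃ = 4 / (1 - ρ)) :
    ((K : ℝ) * ρ ^ 2 ≠ 1 →
        σ ≤ hinf ^ 2 *
          (c₁ * ρ ^ (2 * (t - s)) + c₂ * (K : ℝ) ^ (-((t - s : ℕ) : ℤ)))) ∧
      ((K : ℝ) * ρ ^ 2 = 1 →
        σ ≤ hinf ^ 2 *
          (ρ ^ (2 * (t - s)) + c₃ * ((t : ℝ) - (s : ℝ)) * (K : ℝ) ^ (-((t - s : ℕ) : ℤ)))) := by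
  subst hσ hη hw hPhi hT hc₁ hc₂ hc₃
  have H : Hyp ν q g εlo εhi δlo δhi := ⟨hq, hεlo, hεhi, hqb, hg, hδlo, hδ, hgb⟩
  haveI hX : Nonempty X := by
    rcases isEmpty_or_nonempty X with hE | hXne
    · exact absurd (Measure.eq_zero_of_isEmpty ν) hν
    · exact hXne
  have hnr : 0 < (ν Set.univ).toReal := by
    refine ENNReal.toReal_pos ?_ (measure_ne_top ν _)
    intro h0
    exact hν (Measure.measure_univ_eq_zero.mp h0)
  -- oscillation control
  have hosc' : ∀ x x', |h x - h x'| ≤ hinf := by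
    intro x x'
    have hbd : BddAbove (Set.range fun p : X × X => |h p.1 - h p.2|) := by
      refine ⟨2 * C, ?_⟩
      rintro y ⟨p, rfl⟩
      calc |h p.1 - h p.2| ≤ |h p.1| + |h p.2| := abs_sub _ _
        _ ≤ 2 * C := by linarith [hhb p.1, hhb p.2]
    exact le_trans (le_ciSup hbd (⟨x, x'⟩ : X × X)) hosc
  have hinf0 : 0 ≤ hinf := by
    obtain ⟨x0⟩ := hX
    have := hosc' x0 x0
    simpa using this
  -- ρ facts
  have hr1 : εlo / εhi ≤ 1 := (div_le_one H.εhi_pos).mpr hεhi.le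
  have hrpos : 0 < εlo / εhi := div_pos hεlo H.εhi_pos
  have hρ0 : 0 ≤ ρ := by rw [hρ]; linarith
  have hρlt : ρ < 1 := by rw [hρ]; linarith
  have h1ρ : 0 < 1 - ρ := by linarith
  have hKR : (0:ℝ) < (K:ℝ) := by exact_mod_cast Nat.lt_of_lt_of_le Nat.zero_lt_one hK
  set Δ : ℕ := t - s with hΔdef
  -- T-statistic facts at level Δ
  obtain ⟨hTm, lo, hi, hTi, hctr⟩ := H.Tfact (μ0 := μ0) (s := s) hnr hh hhb hosc' Δ
  set M : ℝ := |lo| ⊔ |hi| with hMdef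
  have hM : 0 ≤ M := le_trans (abs_nonneg lo) le_sup_left
  have hloM : -M ≤ lo := by
    have h1 : |lo| ≤ M := le_sup_left
    linarith [neg_abs_le lo]
  have hhiM : hi ≤ M := le_trans (le_abs_self hi) le_sup_right
  have hTb : ∀ x, |Tstat ν q g μ0 s h Δ x| ≤ M := fun x => abs_le.mpr
    ⟨le_trans hloM (hTi x).1, le_trans (hTi x).2 hhiM⟩
  have hlohi : lo ≤ hi := by
    obtain ⟨x0⟩ := hX
    exact le_trans (hTi x0).1 (hTi x0).2
  -- the mean m
  set m : ℝ := filtF ν q g μ0 s Δ (Tstat ν q g μ0 s h Δ) with hmdef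
  have hmeq : m = Lam ν q g μ0 s Δ (Tstat ν q g μ0 s h Δ) /
      Lam ν q g μ0 s Δ (fun _ => 1) := H.filtF_eq hnr Δ hM hTm hTb
  have hmmem : m ∈ Set.Icc lo hi := by
    rw [hmeq]
    have := H.ratio_sandwich (μ0 := μ0) (s := s) (k := Δ) (Mw := 1) zero_le_one hTm hTi
      measurable_const (fun x => by norm_num) (fun x => zero_le_one) (H.lam_one_pos hnr Δ)
    have he : (fun x => Tstat ν q g μ0 s h Δ x * (1:ℝ)) = Tstat ν q g μ0 s h Δ := by
      funext x; rw [mul_one]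
    rwa [he] at this
  -- variance term bound
  have hfvar_meas : Measurable fun x => (Tstat ν q g μ0 s h Δ x - m) ^ 2 :=
    (hTm.sub measurable_const).pow_const 2
  have hfvar_mem : ∀ x, (Tstat ν q g μ0 s h Δ x - m) ^ 2 ∈ Set.Icc 0 ((hi - lo) ^ 2) := by
    intro x
    constructor
    · positivity
    · have h1 : |Tstat ν q g μ0 s h Δ x - m| ≤ hi - lo := abs_le.mpr
        ⟨by linarith [(hTi x).1, hmmem.2], by linarith [(hTi x).2, hmmem.1]⟩
      calc (Tstat ν q g μ0 s h Δ x - m) ^ 2 = |Tstat ν q g μ0 s h Δ x - m| ^ 2 := by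
            rw [sq_abs]
        _ ≤ (hi - lo) ^ 2 := by
            apply pow_le_pow_left₀ (abs_nonneg _) h1
  have hfvar_bd : ∀ x, |(Tstat ν q g μ0 s h Δ x - m) ^ 2| ≤ (hi - lo) ^ 2 := fun x => by
    rw [abs_of_nonneg (hfvar_mem x).1]; exact (hfvar_mem x).2
  have hVeq : filtF ν q g μ0 s Δ (fun x => (Tstat ν q g μ0 s h Δ x - m) ^ 2) =
      Lam ν q g μ0 s Δ (fun x => (Tstat ν q g μ0 s h Δ x - m) ^ 2) /
        Lam ν q g μ0 s Δ (fun _ => 1) :=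
    H.filtF_eq hnr Δ (by positivity) hfvar_meas hfvar_bd
  have hVmem : filtF ν q g μ0 s Δ (fun x => (Tstat ν q g μ0 s h Δ x - m) ^ 2) ∈
      Set.Icc (0:ℝ) ((hi - lo) ^ 2) := by
    rw [hVeq]
    have := H.ratio_sandwich (μ0 := μ0) (s := s) (k := Δ) (Mw := 1) zero_le_one hfvar_meas
      hfvar_mem measurable_const (fun x => by norm_num) (fun x => zero_le_one)
      (H.lam_one_pos hnr Δ)
    have he : (fun x => (Tstat ν q g μ0 s h Δ x - m) ^ 2 * (1:ℝ)) =
        fun x => (Tstat ν q g μ0 s h Δ x - m) ^ 2 := by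
      funext x; rw [mul_one]
    rwa [he] at this
  have hVb : filtF ν q g μ0 s Δ (fun x => (Tstat ν q g μ0 s h Δ x - m) ^ 2) ≤
      (ρ ^ Δ) ^ 2 * hinf ^ 2 := by
    have h1 : (hi - lo) ^ 2 ≤ ((1 - εlo / εhi) ^ Δ * hinf) ^ 2 :=
      pow_le_pow_left₀ (by linarith) hctr 2
    have h2 : ((1 - εlo / εhi) ^ Δ * hinf) ^ 2 = (ρ ^ Δ) ^ 2 * hinf ^ 2 := by
      rw [hρ]; ring
    linarith [hVmem.2]
  -- abs bound for q
  have hqabs : ∀ (x y : X), |q x y| ≤ εhi := fun x y => abs_le.mpr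
    ⟨by linarith [(hqb x y).1, hεlo, H.εhi_pos], (hqb x y).2⟩
  -- the main inequality on σ
  have main : filtF ν q g μ0 s Δ (fun x => (Tstat ν q g μ0 s h Δ x - m) ^ 2) +
      (∑ ℓ ∈ Finset.Ico s t, (K : ℝ) ^ ((ℓ : ℤ) - (t : ℤ)) *
        (filtF ν q g μ0 s (ℓ - s)
            (Lker ν q g ℓ fun x =>
              filtF ν q g μ0 s (ℓ - s)
                  (fun x' => (Tstat ν q g μ0 s h (ℓ - s) x' -
                    Tstat ν q g μ0 s h (ℓ + 1 - s) x) ^ 2 * q x' x) /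
                filtF ν q g μ0 s (ℓ - s) (fun x' => q x' x) *
                Lpow ν q g (t - 1 - ℓ) (ℓ + 1) (fun _ => 1) x) /
          filtF ν q g μ0 s (ℓ - s) (Lpow ν q g (t - ℓ) ℓ (fun _ => 1)))) ≤
      (ρ ^ Δ) ^ 2 * hinf ^ 2 + ∑ ℓ ∈ Finset.Ico s t,
        (K : ℝ) ^ ((ℓ : ℤ) - (t : ℤ)) * ((ρ ^ (ℓ - s)) ^ 2 * hinf ^ 2) := by
    refine add_le_add hVb (Finset.sum_le_sum ?_)
    intro ℓ hℓ
    obtain ⟨hsl, hlt⟩ := Finset.mem_Ico.mp hℓ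
    have hE1 : ℓ + 1 - s = ℓ - s + 1 := by omega
    rw [hE1]
    set k : ℕ := ℓ - s with hkdef
    obtain ⟨hTmk, lok, hik, hTik, hctrk⟩ := H.Tfact (μ0 := μ0) (s := s) hnr hh hhb hosc' k
    have hTmk1 : Measurable (Tstat ν q g μ0 s h (k + 1)) :=
      (H.Tfact (μ0 := μ0) (s := s) hnr hh hhb hosc' (k + 1)).1
    set Mk : ℝ := |lok| ⊔ |hik| with hMkdef
    have hMk : 0 ≤ Mk := le_trans (abs_nonneg lok) le_sup_left
    have hloMk : -Mk ≤ lok := by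
      have h1 : |lok| ≤ Mk := le_sup_left
      linarith [neg_abs_le lok]
    have hhiMk : hik ≤ Mk := le_trans (le_abs_self hik) le_sup_right
    have hTbk : ∀ x, |Tstat ν q g μ0 s h k x| ≤ Mk := fun x => abs_le.mpr
      ⟨le_trans hloMk (hTik x).1, le_trans (hTik x).2 hhiMk⟩
    have hlohik : lok ≤ hik := by
      obtain ⟨x0⟩ := hX
      exact le_trans (hTik x0).1 (hTik x0).2
    set cw : ℝ := (hik - lok) ^ 2 with hcwdef
    have hcw0 : 0 ≤ cw := sq_nonneg _
    -- membership of the (k+1)-statistic in [lok, hik]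
    have hz_mem : ∀ z, Tstat ν q g μ0 s h (k + 1) z ∈ Set.Icc lok hik := by
      intro z
      rw [H.Tstat_succ_eq hnr hMk hTmk hTbk z]
      exact H.ratio_sandwich H.εhi_pos.le hTmk hTik (H.q_fst z)
        (fun x => hqabs x z) (fun x => H.q_nonneg x z) (H.lam_q_pos hnr k z)
    -- the squared-difference function
    have hfmem : ∀ z x', (Tstat ν q g μ0 s h k x' - Tstat ν q g μ0 s h (k + 1) z) ^ 2 ∈
        Set.Icc (0:ℝ) cw := by
      intro z x'
      refine ⟨sq_nonneg _, ?_⟩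
      have h1 : |Tstat ν q g μ0 s h k x' - Tstat ν q g μ0 s h (k + 1) z| ≤ hik - lok :=
        abs_le.mpr ⟨by linarith [(hTik x').1, (hz_mem z).2],
          by linarith [(hTik x').2, (hz_mem z).1]⟩
      calc (Tstat ν q g μ0 s h k x' - Tstat ν q g μ0 s h (k + 1) z) ^ 2
          = |Tstat ν q g μ0 s h k x' - Tstat ν q g μ0 s h (k + 1) z| ^ 2 := (sq_abs _).symm
        _ ≤ (hik - lok) ^ 2 := pow_le_pow_left₀ (abs_nonneg _) h1 2
    have hfz_meas : ∀ z, Measurable fun x' =>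
        (Tstat ν q g μ0 s h k x' - Tstat ν q g μ0 s h (k + 1) z) ^ 2 * q x' z := by
      intro z
      exact (((hTmk.sub measurable_const).pow_const 2).mul (H.q_fst z))
    have hfz_bd : ∀ z x', |(Tstat ν q g μ0 s h k x' -
        Tstat ν q g μ0 s h (k + 1) z) ^ 2 * q x' z| ≤ cw * εhi := by
      intro z x'
      rw [abs_mul, abs_of_nonneg (hfmem z x').1]
      exact mul_le_mul (hfmem z x').2 (hqabs x' z) (abs_nonneg _) hcw0
    -- the function w as a quotient of `Lam`s
    set wfun : X → ℝ := fun z =>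
      filtF ν q g μ0 s k
          (fun x' => (Tstat ν q g μ0 s h k x' -
            Tstat ν q g μ0 s h (k + 1) z) ^ 2 * q x' z) /
        filtF ν q g μ0 s k (fun x' => q x' z) with hwfundef
    have hweq : ∀ z, wfun z =
        Lam ν q g μ0 s k (fun x' => (Tstat ν q g μ0 s h k x' -
            Tstat ν q g μ0 s h (k + 1) z) ^ 2 * q x' z) /
          Lam ν q g μ0 s k (fun x' => q x' z) := by
      intro z
      rw [hwfundef]
      simp only
      rw [H.filtF_eq hnr k (M := cw * εhi) (mul_nonneg hcw0 H.εhi_pos.le)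
          (hfz_meas z) (hfz_bd z),
        H.filtF_eq hnr k (M := εhi) H.εhi_pos.le (H.q_fst z) (fun x => hqabs x z)]
      have hZ : Lam ν q g μ0 s k (fun _ => 1) ≠ 0 := ne_of_gt (H.lam_one_pos hnr k)
      rw [div_div_div_comm, div_self hZ, div_one]
    have hwmem : ∀ z, wfun z ∈ Set.Icc 0 cw := by
      intro z
      rw [hweq z]
      exact H.ratio_sandwich H.εhi_pos.le ((hTmk.sub measurable_const).pow_const 2)
        (fun x' => hfmem z x') (H.q_fst z) (fun x => hqabs x z)
        (fun x => H.q_nonneg x z) (H.lam_q_pos hnr k z)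
    have hwabs : ∀ z, |wfun z| ≤ cw := fun z => abs_le.mpr
      ⟨by linarith [(hwmem z).1, hcw0], (hwmem z).2⟩
    have hwmeas : Measurable wfun := by
      have hfe : wfun = fun z =>
          Lam ν q g μ0 s k (fun x' => (Tstat ν q g μ0 s h k x' -
              Tstat ν q g μ0 s h (k + 1) z) ^ 2 * q x' z) /
            Lam ν q g μ0 s k (fun x' => q x' z) := funext hweq
      rw [hfe]
      have hnum : Measurable fun z => Lam ν q g μ0 s k
          (fun x' => (Tstat ν q g μ0 s h k x' -
            Tstat ν q g μ0 s h (k + 1) z) ^ 2 * q x' z) := by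
        apply H.lam_param_meas (M := cw * εhi) (mul_nonneg hcw0 H.εhi_pos.le)
        · exact (((hTmk.comp measurable_fst).sub
            (hTmk1.comp measurable_snd)).pow_const 2).mul H.hq
        · intro x y; exact hfz_bd y x
      have hden : Measurable fun z => Lam ν q g μ0 s k (fun x' => q x' z) := by
        apply H.lam_param_meas (M := εhi) H.εhi_pos.le H.hq
        intro x y; exact hqabs x y
      exact hnum.div hden
    -- the tail product F
    set F : X → ℝ := Lpow ν q g (t - 1 - ℓ) (ℓ + 1) (fun _ => 1) with hFdef
    have hFm := H.lpow_meas (M := 1) (f := fun _ => (1:ℝ)) zero_le_one measurable_const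
      (fun x => by norm_num) (t - 1 - ℓ) (ℓ + 1)
    have hF0 : ∀ x, 0 ≤ F x := fun x =>
      H.Lpow_nonneg (fun _ => zero_le_one) (t - 1 - ℓ) (ℓ + 1) x
    -- w·F and its bound
    have hwF_meas : Measurable fun x => wfun x * F x := hwmeas.mul hFm.1
    have hwF_bd : ∀ x, |wfun x * F x| ≤ cw * (1 * chi1 ν εhi δhi ^ (t - 1 - ℓ)) := by
      intro x
      rw [abs_mul]
      exact mul_le_mul (hwabs x) (hFm.2 x) (abs_nonneg _) hcw0
    have hchipow : (0:ℝ) ≤ 1 * chi1 ν εhi δhi ^ (t - 1 - ℓ) := by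
      rw [one_mul]; exact pow_nonneg H.chi1_nonneg _
    -- the numerator N and denominator D
    have hNm := H.lker_meas (M := cw * (1 * chi1 ν εhi δhi ^ (t - 1 - ℓ)))
      (mul_nonneg hcw0 hchipow) hwF_meas hwF_bd ℓ
    have hDm := H.lpow_meas (M := 1) (f := fun _ => (1:ℝ)) zero_le_one measurable_const
      (fun x => by norm_num) (t - ℓ) ℓ
    -- D = Lker ℓ F
    have htℓ : t - ℓ = (t - 1 - ℓ) + 1 := by omega
    have hDL : ∀ x, Lpow ν q g (t - ℓ) ℓ (fun _ => 1) x = Lker ν q g ℓ F x := by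
      intro x
      rw [htℓ]
      rfl
    -- pointwise N ≤ cw · D
    have hND : ∀ x, Lker ν q g ℓ (fun x' => wfun x' * F x') x ≤
        cw * Lpow ν q g (t - ℓ) ℓ (fun _ => 1) x := by
      intro x
      rw [hDL x, ← H.Lker_const_mul]
      exact H.Lker_mono (f' := fun x => cw * F x) (M := cw * (1 * chi1 ν εhi δhi ^ (t - 1 - ℓ)))
        (M' := cw * (1 * chi1 ν εhi δhi ^ (t - 1 - ℓ)))
        hwF_meas hwF_bd
        (measurable_const.mul hFm.1)
        (fun x' => by
          rw [abs_mul, abs_of_nonneg hcw0]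
          exact mul_le_mul_of_nonneg_left (hFm.2 x') hcw0)
        (fun x' => mul_le_mul_of_nonneg_right (hwmem x').2 (hF0 x')) ℓ x
    -- Lam-level comparisons
    have hLamN_le : Lam ν q g μ0 s k (Lker ν q g ℓ (fun x' => wfun x' * F x')) ≤
        cw * Lam ν q g μ0 s k (Lpow ν q g (t - ℓ) ℓ (fun _ => 1)) := by
      rw [← H.Lam_const_mul]
      exact H.Lam_mono (f' := fun x => cw * Lpow ν q g (t - ℓ) ℓ (fun _ => 1) x) (M := cw * (1 * chi1 ν εhi δhi ^ (t - 1 - ℓ)) * chi1 ν εhi δhi)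
        (M' := cw * (1 * chi1 ν εhi δhi ^ (t - ℓ)))
        (mul_nonneg (mul_nonneg hcw0 hchipow) H.chi1_nonneg)
        (mul_nonneg hcw0 (by rw [one_mul]; exact pow_nonneg H.chi1_nonneg _))
        hNm.1 hNm.2 (measurable_const.mul hDm.1)
        (fun x => by
          rw [abs_mul, abs_of_nonneg hcw0]
          exact mul_le_mul_of_nonneg_left (hDm.2 x) hcw0)
        hND k
    have hLamN_nn : 0 ≤ Lam ν q g μ0 s k (Lker ν q g ℓ (fun x' => wfun x' * F x')) :=
      H.Lam_nonneg (fun x => H.Lker_nonneg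
        (fun x' => mul_nonneg (hwmem x').1 (hF0 x')) ℓ x) k
    have hLamD_pos : 0 < Lam ν q g μ0 s k (Lpow ν q g (t - ℓ) ℓ (fun _ => 1)) := by
      refine H.lam_pos_of_lower (M := 1 * chi1 ν εhi δhi ^ (t - ℓ))
        (by rw [one_mul]; exact pow_nonneg H.chi1_nonneg _)
        (pow_pos (H.clo1_pos hnr) (t - ℓ)) hnr hDm.1 hDm.2 ?_ k
      intro x
      have := H.Lpow_lower (M := 1) (c := 1) zero_le_one zero_le_one measurable_const
        (fun x => by norm_num) (fun x => le_refl 1) (t - ℓ) ℓ x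
      rw [one_mul] at this
      exact this
    -- the quotient of filters
    have hquot : filtF ν q g μ0 s k (Lker ν q g ℓ (fun x' => wfun x' * F x')) /
        filtF ν q g μ0 s k (Lpow ν q g (t - ℓ) ℓ (fun _ => 1)) ≤ cw := by
      rw [H.filtF_eq hnr k (mul_nonneg (mul_nonneg hcw0 hchipow) H.chi1_nonneg)
          hNm.1 hNm.2,
        H.filtF_eq hnr k (M := 1 * chi1 ν εhi δhi ^ (t - ℓ))
          (by rw [one_mul]; exact pow_nonneg H.chi1_nonneg _) hDm.1 hDm.2]
      have hZ : Lam ν q g μ0 s k (fun _ => 1) ≠ 0 := ne_of_gt (H.lam_one_pos hnr k)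
      rw [div_div_div_comm, div_self hZ, div_one, div_le_iff₀ hLamD_pos]
      linarith [hLamN_le]
    have hquot_nn : 0 ≤ filtF ν q g μ0 s k (Lker ν q g ℓ (fun x' => wfun x' * F x')) /
        filtF ν q g μ0 s k (Lpow ν q g (t - ℓ) ℓ (fun _ => 1)) := by
      rw [H.filtF_eq hnr k (mul_nonneg (mul_nonneg hcw0 hchipow) H.chi1_nonneg)
          hNm.1 hNm.2,
        H.filtF_eq hnr k (M := 1 * chi1 ν εhi δhi ^ (t - ℓ))
          (by rw [one_mul]; exact pow_nonneg H.chi1_nonneg _) hDm.1 hDm.2]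
      have hZ : Lam ν q g μ0 s k (fun _ => 1) ≠ 0 := ne_of_gt (H.lam_one_pos hnr k)
      rw [div_div_div_comm, div_self hZ, div_one]
      exact div_nonneg hLamN_nn hLamD_pos.le
    -- conclude the per-term bound
    have hKz : (0:ℝ) ≤ (K : ℝ) ^ ((ℓ : ℤ) - (t : ℤ)) := le_of_lt (zpow_pos hKR _)
    have hcwb : cw ≤ (ρ ^ k) ^ 2 * hinf ^ 2 := by
      have h1 : (hik - lok) ^ 2 ≤ ((1 - εlo / εhi) ^ k * hinf) ^ 2 :=
        pow_le_pow_left₀ (by linarith) hctrk 2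
      have h2 : ((1 - εlo / εhi) ^ k * hinf) ^ 2 = (ρ ^ k) ^ 2 * hinf ^ 2 := by
        rw [hρ]; ring
      rw [hcwdef]; linarith
    apply mul_le_mul_of_nonneg_left _ hKz
    exact le_trans hquot hcwb
  -- sum computation
  have hKne : ((K:ℝ)) ≠ 0 := ne_of_gt hKR
  have hΔz : (Δ:ℤ) = (t:ℤ) - (s:ℤ) := by omega
  have hsum_eq : (∑ ℓ ∈ Finset.Ico s t,
      (K : ℝ) ^ ((ℓ : ℤ) - (t : ℤ)) * ((ρ ^ (ℓ - s)) ^ 2 * hinf ^ 2)) =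
      hinf ^ 2 * ((K : ℝ) ^ (-(Δ : ℤ)) *
        ∑ j ∈ Finset.range Δ, ((K : ℝ) * ρ ^ 2) ^ j) := by
    rw [Finset.sum_Ico_eq_sum_range, Finset.mul_sum, Finset.mul_sum]
    apply Finset.sum_congr rfl
    intro j hj
    have e1 : ((s + j : ℕ) : ℤ) - (t : ℤ) = (j : ℤ) + (-(Δ : ℤ)) := by omega
    have e2 : s + j - s = j := by omega
    rw [e1, e2, zpow_add₀ hKne, zpow_natCast]
    have e3 : (ρ ^ j) ^ 2 = (ρ ^ 2) ^ j := by rw [← pow_mul, ← pow_mul, mul_comm]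
    rw [e3, mul_pow]
    ring
  have hκK : (K : ℝ) ^ (-(Δ : ℤ)) * (K : ℝ) ^ Δ = 1 := by
    rw [zpow_neg, zpow_natCast]
    exact inv_mul_cancel₀ (pow_ne_zero Δ hKne)
  have hκnn : (0:ℝ) ≤ (K : ℝ) ^ (-(Δ : ℤ)) := (zpow_pos hKR _).le
  have hκinv : (K : ℝ) ^ (-(Δ : ℤ)) = ((K:ℝ)⁻¹) ^ Δ := by
    rw [zpow_neg, zpow_natCast, inv_pow]
  have hPP : (ρ ^ Δ) ^ 2 = (ρ ^ 2) ^ Δ := by rw [← pow_mul, ← pow_mul, mul_comm]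
  have hfour : (1:ℝ) ≤ 4 / (1 - ρ) := by
    rw [le_div_iff₀ h1ρ]; linarith
  constructor
  · -- case K ρ² ≠ 1
    intro hcase
    have hKρne : (1:ℝ) - (K:ℝ) * ρ ^ 2 ≠ 0 := fun h0 => hcase (by linarith)
    have hgeo : (∑ j ∈ Finset.range Δ, ((K:ℝ) * ρ ^ 2) ^ j) * ((K:ℝ) * ρ ^ 2 - 1) =
        ((K:ℝ) * ρ ^ 2) ^ Δ - 1 := by
      rw [geom_sum_eq hcase Δ]
      exact div_mul_cancel₀ _ (sub_ne_zero.mpr hcase)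
    have hκS : (K : ℝ) ^ (-(Δ : ℤ)) * ∑ j ∈ Finset.range Δ, ((K:ℝ) * ρ ^ 2) ^ j =
        ((K : ℝ) ^ (-(Δ : ℤ)) - (ρ ^ 2) ^ Δ) / (1 - (K:ℝ) * ρ ^ 2) := by
      rw [eq_div_iff hKρne]
      linear_combination (-((K : ℝ) ^ (-(Δ : ℤ)))) * hgeo - ((ρ^2)^Δ) * hκK
    have hX0 : 0 ≤ ((K : ℝ) ^ (-(Δ : ℤ)) - (ρ ^ 2) ^ Δ) / (1 - (K:ℝ) * ρ ^ 2) := by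
      rcases hKρne.lt_or_gt with hlt | hgt
      · have h1 : (K:ℝ)⁻¹ ≤ ρ ^ 2 := by
          have h2 : (K:ℝ)⁻¹ * 1 ≤ (K:ℝ)⁻¹ * ((K:ℝ) * ρ ^ 2) :=
            mul_le_mul_of_nonneg_left (by linarith) (inv_nonneg.mpr hKR.le)
          rw [mul_one] at h2
          calc (K:ℝ)⁻¹ ≤ (K:ℝ)⁻¹ * ((K:ℝ) * ρ ^ 2) := h2
            _ = ρ ^ 2 := by field_simp
        have h2 : (K : ℝ) ^ (-(Δ : ℤ)) ≤ (ρ ^ 2) ^ Δ := by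
          rw [hκinv]; exact pow_le_pow_left₀ (inv_nonneg.mpr hKR.le) h1 Δ
        rw [← neg_div_neg_eq]
        exact div_nonneg (by linarith) (by linarith)
      · have h1 : ρ ^ 2 ≤ (K:ℝ)⁻¹ := by
          have h2 : (K:ℝ)⁻¹ * ((K:ℝ) * ρ ^ 2) ≤ (K:ℝ)⁻¹ * 1 :=
            mul_le_mul_of_nonneg_left (by linarith) (inv_nonneg.mpr hKR.le)
          rw [mul_one] at h2
          calc ρ ^ 2 = (K:ℝ)⁻¹ * ((K:ℝ) * ρ ^ 2) := by field_simp
            _ ≤ (K:ℝ)⁻¹ := h2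
        have h2 : (ρ ^ 2) ^ Δ ≤ (K : ℝ) ^ (-(Δ : ℤ)) := by
          rw [hκinv]; exact pow_le_pow_left₀ (sq_nonneg ρ) h1 Δ
        exact div_nonneg (by linarith) (by linarith)
    refine le_trans main ?_
    rw [hsum_eq, hκS, pow_mul ρ 2 Δ, hPP]
    have ceq : 4 / (1 - ρ) * (((K : ℝ) ^ (-(Δ : ℤ)) - (ρ ^ 2) ^ Δ) / (1 - (K:ℝ) * ρ ^ 2)) =
        4 / ((1 - ρ) * (1 - (K:ℝ) * ρ ^ 2)) * ((K : ℝ) ^ (-(Δ : ℤ)) - (ρ ^ 2) ^ Δ) := by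
      rw [div_mul_div_comm, div_mul_eq_mul_div]
    have key : ((K : ℝ) ^ (-(Δ : ℤ)) - (ρ ^ 2) ^ Δ) / (1 - (K:ℝ) * ρ ^ 2) ≤
        4 / ((1 - ρ) * (1 - (K:ℝ) * ρ ^ 2)) * ((K : ℝ) ^ (-(Δ : ℤ)) - (ρ ^ 2) ^ Δ) := by
      rw [← ceq]
      exact le_mul_of_one_le_left hX0 hfour
    have h9 : hinf ^ 2 * (((K : ℝ) ^ (-(Δ : ℤ)) - (ρ ^ 2) ^ Δ) / (1 - (K:ℝ) * ρ ^ 2)) ≤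
        hinf ^ 2 * (4 / ((1 - ρ) * (1 - (K:ℝ) * ρ ^ 2)) *
          ((K : ℝ) ^ (-(Δ : ℤ)) - (ρ ^ 2) ^ Δ)) :=
      mul_le_mul_of_nonneg_left key (sq_nonneg hinf)
    have expand : hinf ^ 2 * ((1 - 4 / ((1 - ρ) * (1 - (K:ℝ) * ρ ^ 2))) * (ρ ^ 2) ^ Δ +
        4 / ((1 - ρ) * (1 - (K:ℝ) * ρ ^ 2)) * (K : ℝ) ^ (-(Δ : ℤ))) =
        (ρ ^ 2) ^ Δ * hinf ^ 2 + hinf ^ 2 * (4 / ((1 - ρ) * (1 - (K:ℝ) * ρ ^ 2)) *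
          ((K : ℝ) ^ (-(Δ : ℤ)) - (ρ ^ 2) ^ Δ)) := by ring
    rw [expand]
    linarith [h9]
  · -- case K ρ² = 1
    intro hcase
    refine le_trans main ?_
    rw [hsum_eq]
    have hS1 : (∑ j ∈ Finset.range Δ, ((K:ℝ) * ρ ^ 2) ^ j) = (Δ : ℝ) := by
      rw [hcase]
      simp
    rw [hS1, pow_mul ρ 2 Δ, hPP]
    have hts : (t:ℝ) - (s:ℝ) = (Δ:ℝ) := by
      rw [hΔdef, Nat.cast_sub hst]
    rw [hts]
    have h8 : (K : ℝ) ^ (-(Δ : ℤ)) * (Δ:ℝ) ≤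
        4 / (1 - ρ) * (Δ:ℝ) * (K : ℝ) ^ (-(Δ : ℤ)) := by
      nlinarith [mul_nonneg (mul_nonneg (sub_nonneg.mpr hfour)
        (Nat.cast_nonneg (α := ℝ) Δ)) hκnn]
    have h9 : hinf ^ 2 * ((K : ℝ) ^ (-(Δ : ℤ)) * (Δ:ℝ)) ≤
        hinf ^ 2 * (4 / (1 - ρ) * (Δ:ℝ) * (K : ℝ) ^ (-(Δ : ℤ))) :=
      mul_le_mul_of_nonneg_left h8 (sq_nonneg hinf)
    have expand : hinf ^ 2 * ((ρ ^ 2) ^ Δ + 4 / (1 - ρ) * (Δ:ℝ) * (K : ℝ) ^ (-(Δ : ℤ))) =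
        (ρ ^ 2) ^ Δ * hinf ^ 2 + hinf ^ 2 * (4 / (1 - ρ) * (Δ:ℝ) *
          (K : ℝ) ^ (-(Δ : ℤ))) := by ring
    rw [expand]
    linarith [h9]

end
end

section
/- Let ρ ∈ (0,1), let K ≥ 2 be an integer with Kρ² ≠ 1, let h∞ > 0 and ε > 0, and set c₁ := 1 − 4/((1−ρ)(1−Kρ²)), c₂ := 4/((1−ρ)(1−Kρ²)), d := c₂ if Kρ² < 1 and d := c₁ if Kρ² > 1. Assume ε ≤ h∞² d. Let (σ_{s,t})_{0 ≤ s ≤ t} be nonnegative real numbers satisfying σ_{s,t} ≤ h∞² (c₁ ρ^{2(t−s)} + c₂ K^{−(t−s)}) for all 0 ≤ s ≤ t. Define the number of active estimators at time t by m_t := Σ_{s=0}^{t} Π_{u=s}^{t} 1{σ_{s,u} ≥ ε}. Then for every t ∈ ℕ, m_t ≤ 1 + log(ε / (h∞² d)) / log(ρ² ∨ K^{−1}), where ρ² ∨ K^{−1} denotes the maximum of ρ² and K^{−1}. -/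
open scoped BigOperators

/-- bound on the number of active adaptive-lag estimators.
Given `ρ ∈ (0,1)`, an integer `K ≥ 2` with `Kρ² ≠ 1`, `h∞ > 0`, `0 < ε ≤ h∞² d`, and
nonnegative numbers `σ_{s,t}` satisfying the variance bound of Theorem 2, the number of
active estimators `m_t = Σ_{s=0}^{t} Π_{u=s}^{t} 1{σ_{s,u} ≥ ε}` satisfies
`m_t ≤ 1 + log(ε/(h∞² d)) / log(ρ² ∨ K⁻¹)` for every `t`. -/
theorem stmt1 (ρ : ℝ) (hρ0 : 0 < ρ) (hρ1 : ρ < 1) (K : ℕ) (hK : 2 ≤ K)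
    (hKρ : (K : ℝ) * ρ ^ 2 ≠ 1) (hinf ε : ℝ) (hhinf : 0 < hinf) (hε : 0 < ε)
    (c₁ c₂ d : ℝ)
    (hc₁ : c₁ = 1 - 4 / ((1 - ρ) * (1 - (K : ℝ) * ρ ^ 2)))
    (hc₂ : c₂ = 4 / ((1 - ρ) * (1 - (K : ℝ) * ρ ^ 2)))
    (hd : d = if (K : ℝ) * ρ ^ 2 < 1 then c₂ else c₁)
    (hεd : ε ≤ hinf ^ 2 * d)
    (σ : ℕ → ℕ → ℝ)
    (hσnn : ∀ s t, s ≤ t → 0 ≤ σ s t)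
    (hσ : ∀ s t, s ≤ t →
      σ s t ≤ hinf ^ 2 * (c₁ * ρ ^ (2 * (t - s)) + c₂ * (K : ℝ) ^ (-((t - s : ℕ) : ℤ))))
    (m : ℕ → ℝ)
    (hm : ∀ t, m t = ∑ s ∈ Finset.range (t + 1),
      ∏ u ∈ Finset.Icc s t, (if ε ≤ σ s u then (1 : ℝ) else 0)) :
    ∀ t : ℕ, m t ≤ 1 + Real.log (ε / (hinf ^ 2 * d)) / Real.log (ρ ^ 2 ⊔ (K : ℝ)⁻¹) := by
  have hK2 : (2:ℝ) ≤ (K:ℝ) := by exact_mod_cast hK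
  have hK0 : (0:ℝ) < (K:ℝ) := by linarith
  set r : ℝ := ρ ^ 2 ⊔ (K : ℝ)⁻¹ with hr
  have hr0 : 0 < r := lt_sup_of_lt_left (by positivity)
  have hr1 : r < 1 := by
    rw [hr, sup_lt_iff]
    constructor
    · nlinarith
    · rw [inv_lt_one_iff₀]; right; linarith
  have hlogr : Real.log r < 0 := Real.log_neg hr0 hr1
  have hc12 : c₁ = 1 - c₂ := by rw [hc₁, hc₂]
  have hkey : 0 < d ∧ ∀ n : ℕ,
      c₁ * ρ ^ (2 * n) + c₂ * (K:ℝ) ^ (-(n:ℤ)) ≤ d * r ^ n := by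
    rcases lt_or_gt_of_ne hKρ with h | h
    · have h1ρ : 0 < 1 - ρ := by linarith
      have h1K : 0 < 1 - (K:ℝ) * ρ ^ 2 := by linarith
      have hprod1 : (1 - ρ) * (1 - (K:ℝ) * ρ ^ 2) ≤ 1 := by nlinarith
      have hc2pos : 4 ≤ c₂ := by
        rw [hc₂, le_div_iff₀ (by positivity)]
        nlinarith
      have hc1neg : c₁ ≤ 0 := by linarith [hc12]
      have hde : d = c₂ := by rw [hd, if_pos h]
      have hre : r = (K:ℝ)⁻¹ := by
        rw [hr, sup_eq_right]
        rw [inv_eq_one_div, le_div_iff₀ hK0]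
        nlinarith
      refine ⟨by rw [hde]; linarith, fun n => ?_⟩
      have h1 : c₁ * ρ ^ (2 * n) ≤ 0 :=
        mul_nonpos_of_nonpos_of_nonneg hc1neg (by positivity)
      have h2 : c₂ * (K:ℝ) ^ (-(n:ℤ)) = d * r ^ n := by
        rw [hde, hre, zpow_neg, zpow_natCast, ← inv_pow]
      linarith
    · have h1ρ : 0 < 1 - ρ := by linarith
      have h1K : 1 - (K:ℝ) * ρ ^ 2 < 0 := by linarith
      have hc2neg : c₂ ≤ 0 := by
        rw [hc₂]
        apply div_nonpos_of_nonneg_of_nonpos (by norm_num)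
        nlinarith
      have hc1pos : 1 ≤ c₁ := by linarith [hc12]
      have hde : d = c₁ := by rw [hd, if_neg (not_lt.mpr (le_of_lt h))]
      have hre : r = ρ ^ 2 := by
        rw [hr, sup_eq_left]
        rw [inv_eq_one_div, div_le_iff₀ hK0]
        nlinarith
      refine ⟨by rw [hde]; linarith, fun n => ?_⟩
      have h1 : c₂ * (K:ℝ) ^ (-(n:ℤ)) ≤ 0 := by
        apply mul_nonpos_of_nonpos_of_nonneg hc2neg
        positivity
      have h2 : c₁ * ρ ^ (2 * n) = d * r ^ n := by
        rw [hde, hre, ← pow_mul]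
      linarith
  obtain ⟨hd0, hbd⟩ := hkey
  have hratio_pos : 0 < ε / (hinf ^ 2 * d) := by positivity
  have hratio_le1 : ε / (hinf ^ 2 * d) ≤ 1 := by
    rw [div_le_one (by positivity)]; exact hεd
  set N := Real.log (ε / (hinf ^ 2 * d)) / Real.log r with hN
  have hN0 : 0 ≤ N := by
    rw [hN, le_div_iff_of_neg hlogr, zero_mul]
    exact Real.log_nonpos hratio_pos.le hratio_le1
  intro t
  have hstep : ∀ s, s ≤ t → ε ≤ σ s t → ((t - s : ℕ) : ℝ) ≤ N := by
    intro s hst hεσ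
    have h1 : ε ≤ hinf ^ 2 * (d * r ^ (t - s)) := by
      calc ε ≤ σ s t := hεσ
        _ ≤ hinf ^ 2 * (c₁ * ρ ^ (2 * (t - s)) + c₂ * (K:ℝ) ^ (-((t - s : ℕ) : ℤ))) :=
            hσ s t hst
        _ ≤ hinf ^ 2 * (d * r ^ (t - s)) := by
            have := hbd (t - s)
            nlinarith [sq_nonneg hinf, hhinf]
    have h2 : ε / (hinf ^ 2 * d) ≤ r ^ (t - s) := by
      rw [div_le_iff₀ (by positivity)]
      calc ε ≤ hinf ^ 2 * (d * r ^ (t - s)) := h1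
        _ = r ^ (t - s) * (hinf ^ 2 * d) := by ring
    have h3 : Real.log (ε / (hinf ^ 2 * d)) ≤ ((t - s : ℕ) : ℝ) * Real.log r := by
      calc Real.log (ε / (hinf ^ 2 * d)) ≤ Real.log (r ^ (t - s)) :=
            Real.log_le_log hratio_pos h2
        _ = ((t - s : ℕ) : ℝ) * Real.log r := by rw [Real.log_pow]
    rw [hN, le_div_iff_of_neg hlogr]
    exact h3
  rw [hm t]
  set n₀ := ⌊N⌋₊ with hn₀
  calc (∑ s ∈ Finset.range (t + 1),
        ∏ u ∈ Finset.Icc s t, (if ε ≤ σ s u then (1 : ℝ) else 0))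
      = ∑ s ∈ Finset.range (t + 1),
        (if ∀ u ∈ Finset.Icc s t, ε ≤ σ s u then (1 : ℝ) else 0) := by
        apply Finset.sum_congr rfl
        intro s _
        exact Finset.prod_boole
    _ = (((Finset.range (t + 1)).filter
          (fun s => ∀ u ∈ Finset.Icc s t, ε ≤ σ s u)).card : ℝ) := by
        rw [Finset.sum_boole]
    _ ≤ ((Finset.Icc (t - n₀) t).card : ℝ) := by
        have hsub : (Finset.range (t + 1)).filter
            (fun s => ∀ u ∈ Finset.Icc s t, ε ≤ σ s u) ⊆ Finset.Icc (t - n₀) t := by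
          intro s hs
          rw [Finset.mem_filter, Finset.mem_range] at hs
          obtain ⟨hs1, hs2⟩ := hs
          have hst : s ≤ t := Nat.lt_succ_iff.mp hs1
          have hεσ : ε ≤ σ s t := hs2 t (Finset.mem_Icc.mpr ⟨hst, le_refl t⟩)
          have := hstep s hst hεσ
          have hle : t - s ≤ n₀ := Nat.le_floor this
          rw [Finset.mem_Icc]
          omega
        exact_mod_cast Finset.card_le_card hsub
    _ ≤ (n₀ : ℝ) + 1 := by
        rw [Nat.card_Icc]
        have : t + 1 - (t - n₀) ≤ n₀ + 1 := by omega
        exact_mod_cast this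
    _ ≤ 1 + N := by
        have := Nat.floor_le hN0
        linarith
end

section
/- Let (Ω, F, P) be a probability space, let ε ∈ ℝ, and let s < t be natural numbers. For each u ∈ {s+1, …, t}, let (V_{N,u})_{N∈ℕ} and (E_{N,u})_{N∈ℕ} be sequences of real random variables on Ω and let v_u, e_u ∈ ℝ be constants such that V_{N,u} → v_u in probability and E_{N,u} → e_u in probability as N → ∞, and assume v_u ≠ ε for all u ∈ {s+1, …, t}. Define the random stopping index ŝ_N(ω) := min{u ∈ {s+1, …, t} : V_{N,u}(ω) < ε}, with the convention that the minimum of the empty set is t, and the deterministic index ŝ := min{u ∈ {s+1, …, t} : v_u < ε} (same convention). Then the adaptively stopped estimator E_{N,ŝ_N} (i.e., ω ↦ E_{N,ŝ_N(ω)}(ω)) converges in probability to e_{ŝ} as N → ∞. -/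
open MeasureTheory

/-- convergence in probability of the adaptively stopped estimator.
For `u ∈ {s+1, …, t}` the variance criteria `V_{N,u}` and estimators `E_{N,u}` converge in
probability to constants `v_u ≠ ε` and `e_u`; the stopping index is the first `u` in
`{s+1, …, t}` with `V_{N,u} < ε` (resp. `v_u < ε`), with the convention that the minimum of
the empty set is `t` (realised by adjoining `{t}` to the set before taking the infimum).
Then `E_{N, ŝ_N}` converges in probability to `e_{ŝ}`. -/
theorem stmt4 {Ω : Type*} [MeasurableSpace Ω] (P : Measure Ω) [IsProbabilityMeasure P]
    (ε : ℝ) (s t : ℕ) (hst : s < t)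
    (V E : ℕ → ℕ → Ω → ℝ)
    (hVmeas : ∀ N u, Measurable (V N u)) (hEmeas : ∀ N u, Measurable (E N u))
    (v e : ℕ → ℝ)
    (hV : ∀ u ∈ Finset.Icc (s + 1) t,
      TendstoInMeasure P (fun N => V N u) Filter.atTop (fun _ => v u))
    (hE : ∀ u ∈ Finset.Icc (s + 1) t,
      TendstoInMeasure P (fun N => E N u) Filter.atTop (fun _ => e u))
    (hv : ∀ u ∈ Finset.Icc (s + 1) t, v u ≠ ε)
    (sN : ℕ → Ω → ℕ)
    (hsN : sN = fun N ω => sInf ({u | u ∈ Finset.Icc (s + 1) t ∧ V N u ω < ε} ∪ {t}))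
    (shat : ℕ) (hshat : shat = sInf ({u | u ∈ Finset.Icc (s + 1) t ∧ v u < ε} ∪ {t})) :
    TendstoInMeasure P (fun N ω => E N (sN N ω) ω) Filter.atTop (fun _ => e shat) := by
  -- shat ∈ Icc (s+1) t
  have hshat_mem : shat ∈ Finset.Icc (s + 1) t := by
    rw [hshat]
    have ht : t ∈ ({u | u ∈ Finset.Icc (s + 1) t ∧ v u < ε} ∪ {t} : Set ℕ) := Or.inr rfl
    have hub : sInf ({u | u ∈ Finset.Icc (s + 1) t ∧ v u < ε} ∪ {t} : Set ℕ) ≤ t :=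
      Nat.sInf_le ht
    have hlb : s + 1 ≤ sInf ({u | u ∈ Finset.Icc (s + 1) t ∧ v u < ε} ∪ {t} : Set ℕ) := by
      rcases Nat.sInf_mem (Set.nonempty_of_mem ht) with h | h
      · exact (Finset.mem_Icc.mp h.1).1
      · simp only [Set.mem_singleton_iff] at h
        rw [h]; exact hst
    exact Finset.mem_Icc.mpr ⟨hlb, hub⟩
  rw [tendstoInMeasure_iff_dist]
  intro δ hδ
  -- bounding sets
  set S := Finset.Icc (s + 1) t with hS
  have key : ∀ N, P {ω | δ ≤ dist (E N (sN N ω) ω) (e shat)} ≤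
      (∑ u ∈ S, P {ω | |v u - ε| ≤ dist (V N u ω) (v u)}) +
        P {ω | δ ≤ dist (E N shat ω) (e shat)} := by
    intro N
    have hsub : {ω | δ ≤ dist (E N (sN N ω) ω) (e shat)} ⊆
        (⋃ u ∈ S, {ω | |v u - ε| ≤ dist (V N u ω) (v u)}) ∪
          {ω | δ ≤ dist (E N shat ω) (e shat)} := by
      intro ω hω
      by_cases hA : ω ∈ ⋃ u ∈ S, {ω | |v u - ε| ≤ dist (V N u ω) (v u)}
      · exact Or.inl hA
      · right
        -- for all u ∈ S, dist (V N u ω) (v u) < |v u - ε|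
        have hall : ∀ u ∈ S, dist (V N u ω) (v u) < |v u - ε| := by
          intro u hu
          by_contra hcon
          exact hA (Set.mem_biUnion hu (not_lt.mp hcon))
        have hiff : ∀ u ∈ S, (V N u ω < ε ↔ v u < ε) := by
          intro u hu
          have h := hall u hu
          rw [Real.dist_eq] at h
          rcases lt_or_gt_of_ne (hv u hu) with hlt | hgt
          · have habs : |v u - ε| = ε - v u := by
              rw [abs_sub_comm]; exact abs_of_pos (by linarith)
            rw [habs] at h
            have := abs_lt.mp h
            constructor <;> intro <;> linarith [this.1, this.2]
          · have habs : |v u - ε| = v u - ε := abs_of_pos (by linarith)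
            rw [habs] at h
            have := abs_lt.mp h
            constructor <;> intro <;> linarith [this.1, this.2]
        have hset : ({u | u ∈ Finset.Icc (s + 1) t ∧ V N u ω < ε} ∪ {t} : Set ℕ) =
            ({u | u ∈ Finset.Icc (s + 1) t ∧ v u < ε} ∪ {t} : Set ℕ) := by
          ext u
          simp only [Set.mem_union, Set.mem_setOf_eq, Set.mem_singleton_iff]
          constructor
          · rintro (⟨hu, hlt⟩ | h)
            · exact Or.inl ⟨hu, (hiff u hu).mp hlt⟩
            · exact Or.inr h
          · rintro (⟨hu, hlt⟩ | h)
            · exact Or.inl ⟨hu, (hiff u hu).mpr hlt⟩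
            · exact Or.inr h
        have heq : sN N ω = shat := by
          rw [hsN, hshat]; simp only; rw [hset]
        simp only [Set.mem_setOf_eq] at hω ⊢
        rw [heq] at hω
        exact hω
    calc P {ω | δ ≤ dist (E N (sN N ω) ω) (e shat)} ≤
        P ((⋃ u ∈ S, {ω | |v u - ε| ≤ dist (V N u ω) (v u)}) ∪
          {ω | δ ≤ dist (E N shat ω) (e shat)}) := measure_mono hsub
      _ ≤ P (⋃ u ∈ S, {ω | |v u - ε| ≤ dist (V N u ω) (v u)}) +
          P {ω | δ ≤ dist (E N shat ω) (e shat)} := measure_union_le _ _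
      _ ≤ (∑ u ∈ S, P {ω | |v u - ε| ≤ dist (V N u ω) (v u)}) +
          P {ω | δ ≤ dist (E N shat ω) (e shat)} := by
          gcongr
          exact measure_biUnion_finset_le _ _
  have hlim : Filter.Tendsto (fun N =>
      (∑ u ∈ S, P {ω | |v u - ε| ≤ dist (V N u ω) (v u)}) +
        P {ω | δ ≤ dist (E N shat ω) (e shat)}) Filter.atTop (nhds 0) := by
    have h1 : Filter.Tendsto (fun N =>
        ∑ u ∈ S, P {ω | |v u - ε| ≤ dist (V N u ω) (v u)}) Filter.atTop (nhds 0) := by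
      have hsum : Filter.Tendsto (fun N =>
          ∑ u ∈ S, P {ω | |v u - ε| ≤ dist (V N u ω) (v u)}) Filter.atTop
          (nhds (∑ u ∈ S, (0 : ENNReal))) := by
        apply tendsto_finset_sum
        intro u hu
        have hpos : (0 : ℝ) < |v u - ε| := abs_pos.mpr (sub_ne_zero.mpr (hv u hu))
        exact tendstoInMeasure_iff_dist.mp (hV u hu) _ hpos
      simpa using hsum
    have h2 := tendstoInMeasure_iff_dist.mp (hE shat hshat_mem) δ hδ
    simpa using h1.add h2
  have hzero : Filter.Tendsto (fun N =>
      P {ω | δ ≤ dist (E N (sN N ω) ω) (e shat)}) Filter.atTop (nhds 0) :=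
    tendsto_of_tendsto_of_tendsto_of_le_of_le tendsto_const_nhds hlim
      (fun N => zero_le) key
  exact hzero
end
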